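/- arXiv:1612.09443 — 9 statements merged into one kernel-verified Lean document; each statement's English description precedes it below -/
import Mathlib

section
/- If k is a non-negative integer and for all n every n×n Latin array with at least 2kn + n − k² − k distinct symbols has a transversal, then every Latin square of order n has a partial transversal of length n − k. -/
def HasTransversal {n : ℕ} {S : Type*} (A : Fin n × Fin n → S) : Prop :=
  ∃ σ : Equiv.Perm (Fin n), Function.Injective fun i => A (i, σ i)

def IsLatin {n : ℕ} {S : Type*} (A : Fin n × Fin n → S) : Prop :=
  (∀ i, Function.Injective fun j => A (i, j)) ∧
  (∀ j, Function.Injective fun i => A (i, j))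

def IsRowLatin {n : ℕ} {S : Type*} (A : Fin n × Fin n → S) : Prop :=
  ∀ i, Function.Injective fun j => A (i, j)

def numSymbols {n : ℕ} {S : Type*} [DecidableEq S] (A : Fin n × Fin n → S) : ℕ :=
  (Finset.univ.image A).card

def HasPartialTransversal {n : ℕ} {S : Type*} (A : Fin n × Fin n → S) (m : ℕ) : Prop :=
  ∃ s : Finset (Fin n × Fin n), s.card = m ∧
    Set.InjOn Prod.fst (s : Set (Fin n × Fin n)) ∧ Set.InjOn Prod.snd (s : Set (Fin n × Fin n)) ∧ Set.InjOn A (s : Set (Fin n × Fin n))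

theorem ell_bound_implies_partial_transversal (k : ℕ)
    (h : ∀ (m : ℕ) (S : Type) [DecidableEq S] (A : Fin m × Fin m → S),
      IsLatin A → (2 * k * m + m - k ^ 2 - k : ℤ) ≤ (numSymbols A : ℤ) →
      HasTransversal A)
    (n : ℕ) (S : Type) [DecidableEq S] (L : Fin n × Fin n → S)
    (hL : IsLatin L) (hsq : numSymbols L = n) :
    HasPartialTransversal L (n - k) := by
  classical
  set m := n + k with hm
  have hnm : n ≤ m := Nat.le_add_right n k
  set A : Fin m × Fin m → S ⊕ (Fin m × Fin m) := fun p =>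
    if hp : (p.1 : ℕ) < n ∧ (p.2 : ℕ) < n then Sum.inl (L (⟨p.1, hp.1⟩, ⟨p.2, hp.2⟩))
    else Sum.inr p with hA
  -- key computation rule for the block
  have hblock : ∀ q : Fin n × Fin n,
      A (q.1.castLE hnm, q.2.castLE hnm) = Sum.inl (L q) := by
    intro q
    have hc : ((q.1.castLE hnm : Fin m) : ℕ) < n ∧ ((q.2.castLE hnm : Fin m) : ℕ) < n :=
      ⟨q.1.isLt, q.2.isLt⟩
    simp only [hA, dif_pos hc]
    rfl
  have hout : ∀ p : Fin m × Fin m, ¬((p.1 : ℕ) < n ∧ (p.2 : ℕ) < n) → A p = Sum.inr p := by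
    intro p hp
    simp only [hA, dif_neg hp]
  -- A is Latin
  have hin : ∀ p : Fin m × Fin m, ∀ hp : (p.1 : ℕ) < n ∧ (p.2 : ℕ) < n,
      A p = Sum.inl (L (⟨p.1, hp.1⟩, ⟨p.2, hp.2⟩)) := by
    intro p hp
    simp only [hA, dif_pos hp]
  have hAL : IsLatin A := by
    constructor
    · intro i j1 j2 heq
      have heq' : A (i, j1) = A (i, j2) := heq
      by_cases hc1 : ((i : ℕ) < n ∧ (j1 : ℕ) < n)
      · by_cases hc2 : ((i : ℕ) < n ∧ (j2 : ℕ) < n)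
        · rw [hin _ hc1, hin _ hc2] at heq'
          have hh := hL.1 ⟨(i : ℕ), hc1.1⟩ (Sum.inl.inj heq')
          simpa [Fin.ext_iff] using hh
        · rw [hin _ hc1, hout _ hc2] at heq'
          exact absurd heq' (by simp)
      · by_cases hc2 : ((i : ℕ) < n ∧ (j2 : ℕ) < n)
        · rw [hout _ hc1, hin _ hc2] at heq'
          exact absurd heq' (by simp)
        · rw [hout _ hc1, hout _ hc2] at heq'
          exact congrArg Prod.snd (Sum.inr.inj heq')
    · intro j i1 i2 heq
      have heq' : A (i1, j) = A (i2, j) := heq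
      by_cases hc1 : ((i1 : ℕ) < n ∧ (j : ℕ) < n)
      · by_cases hc2 : ((i2 : ℕ) < n ∧ (j : ℕ) < n)
        · rw [hin _ hc1, hin _ hc2] at heq'
          have hh := hL.2 ⟨(j : ℕ), hc1.2⟩ (Sum.inl.inj heq')
          simpa [Fin.ext_iff] using hh
        · rw [hin _ hc1, hout _ hc2] at heq'
          exact absurd heq' (by simp)
      · by_cases hc2 : ((i2 : ℕ) < n ∧ (j : ℕ) < n)
        · rw [hout _ hc1, hin _ hc2] at heq'
          exact absurd heq' (by simp)
        · rw [hout _ hc1, hout _ hc2] at heq'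
          exact congrArg Prod.fst (Sum.inr.inj heq')
  -- the block cells
  set Tb : Finset (Fin m × Fin m) :=
    Finset.univ.filter (fun p => (p.1 : ℕ) < n ∧ (p.2 : ℕ) < n) with hTb
  have hTbcard : Tb.card = n * n := by
    have : Tb = Finset.univ.map
        ((Fin.castLEEmb hnm).prodMap (Fin.castLEEmb hnm)) := by
      ext p
      simp only [hTb, Finset.mem_filter, Finset.mem_univ, true_and, Finset.mem_map,
        Function.Embedding.prodMap, Function.Embedding.coeFn_mk, Fin.castLEEmb_apply]
      constructor
      · rintro ⟨h1, h2⟩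
        exact ⟨(⟨p.1, h1⟩, ⟨p.2, h2⟩), by simp [Prod.ext_iff, Prod.map, Fin.ext_iff]⟩
      · rintro ⟨q, hq⟩
        have : (Fin.castLE hnm q.1, Fin.castLE hnm q.2) = p := by
          simpa [Prod.map] using hq
        rw [← this]
        exact ⟨q.1.isLt, q.2.isLt⟩
    rw [this, Finset.card_map]
    simp
  set T : Finset (Fin m × Fin m) := Finset.univ \ Tb with hT
  have hTcard : T.card = m * m - n * n := by
    rw [hT, Finset.card_sdiff_of_subset (Finset.subset_univ _), hTbcard]
    simp
  -- lower bound for the number of symbols of A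
  have hBsub : ((Finset.univ.image L).image Sum.inl ∪ T.image Sum.inr)
      ⊆ Finset.univ.image A := by
    intro x hx
    rcases Finset.mem_union.1 hx with hx | hx
    · rcases Finset.mem_image.1 hx with ⟨s, hs, rfl⟩
      rcases Finset.mem_image.1 hs with ⟨q, _, rfl⟩
      exact Finset.mem_image.2 ⟨(q.1.castLE hnm, q.2.castLE hnm), Finset.mem_univ _,
        by rw [hblock]⟩
    · rcases Finset.mem_image.1 hx with ⟨p, hp, rfl⟩
      have hp' : ¬((p.1 : ℕ) < n ∧ (p.2 : ℕ) < n) := by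
        have := (Finset.mem_sdiff.1 hp).2
        simpa [hTb] using this
      exact Finset.mem_image.2 ⟨p, Finset.mem_univ _, hout p hp'⟩
  have hBcard : ((Finset.univ.image L).image Sum.inl ∪ T.image Sum.inr).card
      = n + (m * m - n * n) := by
    have hsq' : (Finset.univ.image L).card = n := hsq
    rw [Finset.card_union_of_disjoint, Finset.card_image_of_injective _ Sum.inl_injective,
      Finset.card_image_of_injective _ Sum.inr_injective, hsq', hTcard]
    · rw [Finset.disjoint_left]
      rintro x hx hx'
      rcases Finset.mem_image.1 hx with ⟨s, _, rfl⟩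
      rcases Finset.mem_image.1 hx' with ⟨p, _, hp⟩
      exact (Sum.inl_ne_inr (hp.symm)).elim
  have hnumA : n + (m * m - n * n) ≤ numSymbols A := by
    rw [← hBcard]
    exact Finset.card_le_card hBsub
  have hbound : (2 * k * m + m - k ^ 2 - k : ℤ) ≤ (numSymbols A : ℤ) := by
    have h2 : n * n ≤ m * m := Nat.mul_le_mul hnm hnm
    have h1 : (n : ℤ) + ((m : ℤ) * m - (n : ℤ) * n) ≤ (numSymbols A : ℤ) := by
      have h0 := hnumA
      zify [h2] at h0
      linarith [h0]
    have hm' : (m : ℤ) = n + k := by exact_mod_cast hm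
    rw [hm'] at h1 ⊢
    nlinarith [h1]
  obtain ⟨σ, hσ⟩ := h m (S ⊕ (Fin m × Fin m)) A hAL hbound
  -- the block cells hit by the transversal
  set sf : Finset (Fin n × Fin n) :=
    Finset.univ.filter (fun p => σ (p.1.castLE hnm) = p.2.castLE hnm) with hsf
  have hcastinj : Function.Injective (Fin.castLE hnm) := Fin.castLE_injective hnm
  have hfst : ∀ p ∈ sf, ∀ p' ∈ sf, p.1 = p'.1 → p = p' := by
    intro p hp p' hp' he
    have h1 : σ (p.1.castLE hnm) = p.2.castLE hnm := (Finset.mem_filter.1 hp).2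
    have h2 : σ (p'.1.castLE hnm) = p'.2.castLE hnm := (Finset.mem_filter.1 hp').2
    have : p.2.castLE hnm = p'.2.castLE hnm := by rw [← h1, ← h2, he]
    exact Prod.ext he (hcastinj this)
  -- cardinality of sf
  set R : Finset (Fin m) :=
    Finset.univ.filter (fun i => (i : ℕ) < n ∧ ((σ i : Fin m) : ℕ) < n) with hR
  have hsfR : sf.card = R.card := by
    apply Finset.card_bij (fun p _ => p.1.castLE hnm)
    · intro p hp
      have h1 : σ (p.1.castLE hnm) = p.2.castLE hnm := (Finset.mem_filter.1 hp).2
      refine Finset.mem_filter.2 ⟨Finset.mem_univ _, ⟨p.1.isLt, ?_⟩⟩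
      rw [h1]; exact p.2.isLt
    · intro p hp p' hp' he
      exact hfst p hp p' hp' (hcastinj he)
    · intro i hi
      obtain ⟨h1, h2⟩ := (Finset.mem_filter.1 hi).2
      refine ⟨(⟨(i : ℕ), h1⟩, ⟨((σ i : Fin m) : ℕ), h2⟩), ?_, by ext; simp⟩
      refine Finset.mem_filter.2 ⟨Finset.mem_univ _, ?_⟩
      have : (Fin.castLE hnm ⟨(i : ℕ), h1⟩) = i := by ext; simp
      rw [this]; ext; simp
  have hRcard : n - k ≤ R.card := by
    have hsplit := Finset.card_filter_add_card_filter_not (s := Finset.univ)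
      (p := fun i : Fin m => (i : ℕ) < n ∧ ((σ i : Fin m) : ℕ) < n)
    have hcompl : (Finset.univ.filter
        (fun i : Fin m => ¬((i : ℕ) < n ∧ ((σ i : Fin m) : ℕ) < n))).card ≤ k + k := by
      have hsub : Finset.univ.filter
          (fun i : Fin m => ¬((i : ℕ) < n ∧ ((σ i : Fin m) : ℕ) < n))
          ⊆ Finset.univ.filter (fun i : Fin m => n ≤ (i : ℕ))
            ∪ Finset.univ.filter (fun i : Fin m => n ≤ ((σ i : Fin m) : ℕ)) := by
        intro i hi
        have := (Finset.mem_filter.1 hi).2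
        push_neg at this
        rcases Nat.lt_or_ge (i : ℕ) n with hi' | hi'
        · exact Finset.mem_union_right _ (Finset.mem_filter.2 ⟨Finset.mem_univ _, this hi'⟩)
        · exact Finset.mem_union_left _ (Finset.mem_filter.2 ⟨Finset.mem_univ _, hi'⟩)
      have c1 : (Finset.univ.filter (fun i : Fin m => n ≤ (i : ℕ))).card = k := by
        have hlt : (Finset.univ.filter (fun i : Fin m => (i : ℕ) < n)).card = n := by
          have : Finset.univ.filter (fun i : Fin m => (i : ℕ) < n)
              = Finset.univ.map (Fin.castLEEmb hnm) := by
            ext i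
            simp only [Finset.mem_filter, Finset.mem_univ, true_and, Finset.mem_map,
              Fin.castLEEmb_apply]
            constructor
            · intro hi
              exact ⟨⟨(i : ℕ), hi⟩, by ext; simp⟩
            · rintro ⟨j, rfl⟩
              exact j.isLt
          rw [this, Finset.card_map]; simp
        have := Finset.card_filter_add_card_filter_not (s := Finset.univ)
          (p := fun i : Fin m => (i : ℕ) < n)
        have huniv : (Finset.univ : Finset (Fin m)).card = m := by simp
        have heq : ∀ i : Fin m, (¬((i : ℕ) < n)) ↔ n ≤ (i : ℕ) := fun i => not_lt
        rw [Finset.filter_congr (fun i _ => heq i)] at this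
        omega
      have c2 : (Finset.univ.filter (fun i : Fin m => n ≤ ((σ i : Fin m) : ℕ))).card ≤ k := by
        have hmap : (Finset.univ.filter (fun i : Fin m => n ≤ ((σ i : Fin m) : ℕ))).map
            σ.toEmbedding ⊆ Finset.univ.filter (fun j : Fin m => n ≤ (j : ℕ)) := by
          intro j hj
          rcases Finset.mem_map.1 hj with ⟨i, hi, rfl⟩
          exact Finset.mem_filter.2 ⟨Finset.mem_univ _, (Finset.mem_filter.1 hi).2⟩
        have := Finset.card_le_card hmap
        rw [Finset.card_map] at this
        calc (Finset.univ.filter (fun i : Fin m => n ≤ ((σ i : Fin m) : ℕ))).card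
            ≤ (Finset.univ.filter (fun j : Fin m => n ≤ (j : ℕ))).card := this
          _ = k := c1
      calc _ ≤ _ := Finset.card_le_card hsub
        _ ≤ _ := Finset.card_union_le _ _
        _ ≤ k + k := Nat.add_le_add (le_of_eq c1) c2
    have huniv : (Finset.univ : Finset (Fin m)).card = m := by simp
    rw [← hR] at hsplit
    omega
  -- extract a subset of the right size
  have hsize : n - k ≤ sf.card := by rw [hsfR]; exact hRcard
  obtain ⟨s, hssub, hscard⟩ := Finset.exists_subset_card_eq (s := sf) (n := n - k) hsize
  refine ⟨s, hscard, ?_, ?_, ?_⟩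
  · intro p hp p' hp' he
    exact hfst p (hssub hp) p' (hssub hp') he
  · intro p hp p' hp' he
    have h1 : σ (p.1.castLE hnm) = p.2.castLE hnm := (Finset.mem_filter.1 (hssub hp)).2
    have h2 : σ (p'.1.castLE hnm) = p'.2.castLE hnm := (Finset.mem_filter.1 (hssub hp')).2
    have he' : p.2 = p'.2 := he
    have : σ (p.1.castLE hnm) = σ (p'.1.castLE hnm) := by rw [h1, h2, he']
    have := hcastinj (σ.injective this)
    exact Prod.ext this he'
  · intro p hp p' hp' he
    have h1 : σ (p.1.castLE hnm) = p.2.castLE hnm := (Finset.mem_filter.1 (hssub hp)).2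
    have h2 : σ (p'.1.castLE hnm) = p'.2.castLE hnm := (Finset.mem_filter.1 (hssub hp')).2
    have key : A (p.1.castLE hnm, σ (p.1.castLE hnm))
        = A (p'.1.castLE hnm, σ (p'.1.castLE hnm)) := by
      rw [h1, h2, hblock, hblock, he]
    have h3 := hσ key
    have h4 : p.1 = p'.1 := hcastinj h3
    exact hfst p (hssub hp) p' (hssub hp') h4
end

section
/- Let A be a transversal-free array of order n such that the subarray obtained by deleting the last row and last column has a transversal. If the union of the set of symbols in the last row and the set of symbols in the last column has size at least (k+1)n − 1, then A contains at most (1/2)(k² − 2k + 2)n² + (1/2)(3k − 2)n distinct symbols. -/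
private def extLast {n : ℕ} (σ : Equiv.Perm (Fin n)) : Equiv.Perm (Fin (n + 1)) where
  toFun := Fin.lastCases (Fin.last n) (fun i => (σ i).castSucc)
  invFun := Fin.lastCases (Fin.last n) (fun i => (σ.symm i).castSucc)
  left_inv x := by
    cases x using Fin.lastCases with
    | last => simp
    | cast i => simp
  right_inv x := by
    cases x using Fin.lastCases with
    | last => simp
    | cast i => simp

private lemma extLast_castSucc {n : ℕ} (σ : Equiv.Perm (Fin n)) (i : Fin n) :
    extLast σ i.castSucc = (σ i).castSucc := by simp [extLast]

private lemma extLast_last {n : ℕ} (σ : Equiv.Perm (Fin n)) :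
    extLast σ (Fin.last n) = Fin.last n := by simp [extLast]

private lemma corner_eq {S : Type*} {n : ℕ} (A : Fin (n + 1) × Fin (n + 1) → S)
    (hfree : ¬ HasTransversal A) (σ : Equiv.Perm (Fin n))
    (hσ : Function.Injective fun i : Fin n => A (i.castSucc, (σ i).castSucc)) :
    ∃ m : Fin n, A (Fin.last n, Fin.last n) = A (m.castSucc, (σ m).castSucc) := by
  have hni : ¬ Function.Injective (fun x => A (x, extLast σ x)) := fun h => hfree ⟨_, h⟩
  rw [Function.not_injective_iff] at hni
  obtain ⟨a, b, hab, hne⟩ := hni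
  cases a using Fin.lastCases with
  | last =>
    cases b using Fin.lastCases with
    | last => exact absurd rfl hne
    | cast q =>
      simp only [extLast_last, extLast_castSucc] at hab
      exact ⟨q, hab⟩
  | cast p =>
    cases b using Fin.lastCases with
    | last =>
      simp only [extLast_last, extLast_castSucc] at hab
      exact ⟨p, hab.symm⟩
    | cast q =>
      simp only [extLast_castSucc] at hab
      exact absurd (congrArg Fin.castSucc (hσ hab)) hne

private lemma collide {S : Type*} {n : ℕ} (A : Fin (n + 1) × Fin (n + 1) → S)
    (hfree : ¬ HasTransversal A) (σ : Equiv.Perm (Fin n))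
    (hσ : Function.Injective fun i : Fin n => A (i.castSucc, (σ i).castSucc)) (i : Fin n) :
    (∃ m, m ≠ i ∧ A (i.castSucc, Fin.last n) = A (m.castSucc, (σ m).castSucc)) ∨
    (∃ m, m ≠ i ∧ A (Fin.last n, (σ i).castSucc) = A (m.castSucc, (σ m).castSucc)) ∨
    A (i.castSucc, Fin.last n) = A (Fin.last n, (σ i).castSucc) := by
  set τ := extLast σ * Equiv.swap i.castSucc (Fin.last n) with hτ
  have hτi : τ i.castSucc = Fin.last n := by
    rw [hτ, Equiv.Perm.mul_apply, Equiv.swap_apply_left, extLast_last]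
  have hτl : τ (Fin.last n) = (σ i).castSucc := by
    rw [hτ, Equiv.Perm.mul_apply, Equiv.swap_apply_right, extLast_castSucc]
  have hτc : ∀ p : Fin n, p ≠ i → τ p.castSucc = (σ p).castSucc := by
    intro p hp
    rw [hτ, Equiv.Perm.mul_apply,
      Equiv.swap_apply_of_ne_of_ne (by simpa [Fin.castSucc_inj] using hp)
        (Fin.castSucc_lt_last p).ne, extLast_castSucc]
  have hni : ¬ Function.Injective (fun x => A (x, τ x)) := fun h => hfree ⟨_, h⟩
  rw [Function.not_injective_iff] at hni
  obtain ⟨a, b, hab, hne⟩ := hni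
  cases a using Fin.lastCases with
  | last =>
    cases b using Fin.lastCases with
    | last => exact absurd rfl hne
    | cast q =>
      by_cases hq : q = i
      · rw [hq] at hab
        simp only [hτl, hτi] at hab
        exact Or.inr (Or.inr hab.symm)
      · simp only [hτl, hτc q hq] at hab
        exact Or.inr (Or.inl ⟨q, hq, hab⟩)
  | cast p =>
    cases b using Fin.lastCases with
    | last =>
      by_cases hp : p = i
      · rw [hp] at hab
        simp only [hτl, hτi] at hab
        exact Or.inr (Or.inr hab)
      · simp only [hτl, hτc p hp] at hab
        exact Or.inr (Or.inl ⟨p, hp, hab.symm⟩)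
    | cast q =>
      by_cases hp : p = i
      · by_cases hq : q = i
        · rw [hp, hq] at hne
          exact absurd rfl hne
        · rw [hp] at hab
          simp only [hτi, hτc q hq] at hab
          exact Or.inl ⟨q, hq, hab⟩
      · by_cases hq : q = i
        · rw [hq] at hab
          simp only [hτi, hτc p hp] at hab
          exact Or.inl ⟨p, hp, hab.symm⟩
        · simp only [hτc p hp, hτc q hq] at hab
          exact absurd (congrArg Fin.castSucc (hσ hab)) hne

private lemma image_card_le {α β : Type*} [Fintype α] [DecidableEq α] [DecidableEq β]
    (A : α → β) (D : Finset α) (hD : ∀ d ∈ D, ∃ y ∉ D, A y = A d) :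
    (Finset.univ.image A).card + D.card ≤ Fintype.card α := by
  have hsub : Finset.univ.image A ⊆ (Finset.univ \ D).image A := by
    intro s hs
    obtain ⟨x, -, rfl⟩ := Finset.mem_image.mp hs
    by_cases hx : x ∈ D
    · obtain ⟨y, hy, hAy⟩ := hD x hx
      exact Finset.mem_image.mpr ⟨y, by simp [hy], hAy⟩
    · exact Finset.mem_image.mpr ⟨x, by simp [hx], rfl⟩
  have h1 : (Finset.univ.image A).card ≤ (Finset.univ \ D).card :=
    (Finset.card_le_card hsub).trans Finset.card_image_le
  have h2 : (Finset.univ \ D).card + D.card = (Finset.univ : Finset α).card :=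
    Finset.card_sdiff_add_card_eq_card (Finset.subset_univ D)
  rw [Finset.card_univ] at h2
  omega

theorem upper_bound_from_larges {S : Type*} [DecidableEq S] (n k : ℕ)
    (A : Fin (n + 1) × Fin (n + 1) → S)
    (hfree : ¬ HasTransversal A)
    (hsub : HasTransversal (fun p : Fin n × Fin n => A (p.1.castSucc, p.2.castSucc)))
    (hRC : ((Finset.univ.image fun j => A (Fin.last n, j)) ∪
            (Finset.univ.image fun i => A (i, Fin.last n))).card ≥ (k + 1) * (n + 1) - 1) :
    (numSymbols A : ℝ) ≤ ((k : ℝ) ^ 2 - 2 * k + 2) * (n + 1) ^ 2 / 2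
      + (3 * (k : ℝ) - 2) * (n + 1) / 2 := by
  classical
  obtain ⟨σ, hσ'⟩ := hsub
  have hσ : Function.Injective fun i : Fin n => A (i.castSucc, (σ i).castSucc) := hσ'
  obtain ⟨m₀, hm₀⟩ := corner_eq A hfree σ hσ
  rcases Nat.eq_zero_or_pos k with rfl | hk
  · -- k = 0 : counting argument
    have H : ∀ i : Fin n, ∃ p w : Fin (n + 1) × Fin (n + 1),
        (p = (i.castSucc, Fin.last n) ∨ p = (Fin.last n, (σ i).castSucc)) ∧
        A w = A p ∧
        ((w.1 ≠ Fin.last n ∧ w.2 ≠ Fin.last n) ∨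
          (p = (i.castSucc, Fin.last n) ∧ w = (Fin.last n, (σ i).castSucc))) := by
      intro i
      rcases collide A hfree σ hσ i with ⟨m, -, h⟩ | ⟨m, -, h⟩ | h
      · exact ⟨(i.castSucc, Fin.last n), (m.castSucc, (σ m).castSucc), Or.inl rfl, h.symm,
          Or.inl ⟨(Fin.castSucc_lt_last m).ne, (Fin.castSucc_lt_last (σ m)).ne⟩⟩
      · exact ⟨(Fin.last n, (σ i).castSucc), (m.castSucc, (σ m).castSucc), Or.inr rfl, h.symm,
          Or.inl ⟨(Fin.castSucc_lt_last m).ne, (Fin.castSucc_lt_last (σ m)).ne⟩⟩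
      · exact ⟨(i.castSucc, Fin.last n), (Fin.last n, (σ i).castSucc), Or.inl rfl, h.symm,
          Or.inr ⟨rfl, rfl⟩⟩
    choose pk w h1 h2 h3 using H
    have hpkinj : Function.Injective pk := by
      intro i j hij
      rcases h1 i with ha | ha <;> rcases h1 j with hb | hb <;> rw [ha, hb] at hij <;>
        simp only [Prod.mk.injEq] at hij
      · exact Fin.castSucc_inj.mp hij.1
      · exact absurd hij.1 (Fin.castSucc_lt_last i).ne
      · exact absurd hij.1.symm (Fin.castSucc_lt_last j).ne
      · exact σ.injective (Fin.castSucc_inj.mp hij.2)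
    set D : Finset (Fin (n + 1) × Fin (n + 1)) :=
      insert (Fin.last n, Fin.last n) (Finset.univ.image pk) with hD
    have hcornernm : (Fin.last n, Fin.last n) ∉ Finset.univ.image pk := by
      intro hmem
      obtain ⟨j, -, hj⟩ := Finset.mem_image.mp hmem
      rcases h1 j with h | h <;> rw [h] at hj <;> simp only [Prod.mk.injEq] at hj
      · exact (Fin.castSucc_lt_last j).ne hj.1
      · exact (Fin.castSucc_lt_last (σ j)).ne hj.2
    have hDcard : D.card = n + 1 := by
      rw [hD, Finset.card_insert_of_notMem hcornernm,
        Finset.card_image_of_injective _ hpkinj, Finset.card_univ, Fintype.card_fin]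
    have hdom : ∀ d ∈ D, ∃ y ∉ D, A y = A d := by
      intro d hd
      rw [hD, Finset.mem_insert] at hd
      rcases hd with rfl | hd
      · refine ⟨(m₀.castSucc, (σ m₀).castSucc), ?_, hm₀.symm⟩
        rw [hD, Finset.mem_insert]
        rintro (h | h)
        · simp only [Prod.mk.injEq] at h
          exact (Fin.castSucc_lt_last m₀).ne h.1
        · obtain ⟨j, -, hj⟩ := Finset.mem_image.mp h
          rcases h1 j with h' | h' <;> rw [h'] at hj <;> simp only [Prod.mk.injEq] at hj
          · exact (Fin.castSucc_lt_last (σ m₀)).ne hj.2.symm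
          · exact (Fin.castSucc_lt_last m₀).ne hj.1.symm
      · obtain ⟨i, -, rfl⟩ := Finset.mem_image.mp hd
        refine ⟨w i, ?_, h2 i⟩
        rw [hD, Finset.mem_insert]
        rintro (h | h)
        · rcases h3 i with ⟨hw1, hw2⟩ | ⟨-, hwi⟩
          · exact hw1 (congrArg Prod.fst h)
          · rw [hwi] at h
            simp only [Prod.mk.injEq] at h
            exact (Fin.castSucc_lt_last (σ i)).ne h.2
        · obtain ⟨j, -, hj⟩ := Finset.mem_image.mp h
          rcases h3 i with ⟨hw1, hw2⟩ | ⟨hpi, hwi⟩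
          · rcases h1 j with h' | h' <;> rw [h'] at hj
            · exact hw2 (congrArg Prod.snd hj).symm
            · exact hw1 (congrArg Prod.fst hj).symm
          · rw [hwi] at hj
            rcases h1 j with h' | h' <;> rw [h'] at hj <;> simp only [Prod.mk.injEq] at hj
            · exact (Fin.castSucc_lt_last j).ne hj.1
            · have hji : j = i := σ.injective (Fin.castSucc_inj.mp hj.2)
              rw [hji, hpi] at h'
              simp only [Prod.mk.injEq] at h'
              exact (Fin.castSucc_lt_last i).ne h'.1
    have key := image_card_le A D hdom
    rw [hDcard] at key
    have hcard : Fintype.card (Fin (n + 1) × Fin (n + 1)) = (n + 1) * (n + 1) := by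
      simp
    rw [hcard] at key
    have keyN : numSymbols A + (n + 1) ≤ (n + 1) * (n + 1) := key
    have keyR : (numSymbols A : ℝ) + ((n : ℝ) + 1) ≤ ((n : ℝ) + 1) * ((n : ℝ) + 1) := by
      exact_mod_cast keyN
    push_cast
    nlinarith [keyR]
  · -- k ≥ 1 : contradiction
    exfalso
    set R := (Finset.univ.image fun j => A (Fin.last n, j)) with hRdef
    set C := (Finset.univ.image fun i => A (i, Fin.last n)) with hCdef
    have hRcard : R.card ≤ n + 1 := le_trans Finset.card_image_le (by simp)
    have hCcard : C.card ≤ n + 1 := le_trans Finset.card_image_le (by simp)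
    have htR : A (Fin.last n, Fin.last n) ∈ R :=
      Finset.mem_image.mpr ⟨Fin.last n, Finset.mem_univ _, rfl⟩
    have htC : A (Fin.last n, Fin.last n) ∈ C :=
      Finset.mem_image.mpr ⟨Fin.last n, Finset.mem_univ _, rfl⟩
    have hic : 1 ≤ (R ∩ C).card :=
      Finset.card_pos.mpr ⟨_, Finset.mem_inter.mpr ⟨htR, htC⟩⟩
    have hun := Finset.card_union_add_card_inter R C
    have hge : 2 * n + 1 ≤ (R ∪ C).card := by
      refine le_trans ?_ hRC
      have h5 : 2 * (n + 1) ≤ (k + 1) * (n + 1) := Nat.mul_le_mul_right _ (by omega)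
      have h6 := Nat.sub_le_sub_right h5 1
      exact le_trans (by omega) h6
    have hRe : R.card = n + 1 ∧ C.card = n + 1 ∧ (R ∩ C).card = 1 := by omega
    have hrow : Function.Injective fun j => A (Fin.last n, j) := by
      have h' : ((Finset.univ : Finset (Fin (n+1))).image fun j => A (Fin.last n, j)).card
          = (Finset.univ : Finset (Fin (n+1))).card := by
        rw [Finset.card_univ, Fintype.card_fin]
        exact hRe.1
      have hinj := Finset.card_image_iff.mp h'
      intro a b hab
      exact hinj (by simp) (by simp) hab
    have hcol : Function.Injective fun i => A (i, Fin.last n) := by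
      have h' : ((Finset.univ : Finset (Fin (n+1))).image fun i => A (i, Fin.last n)).card
          = (Finset.univ : Finset (Fin (n+1))).card := by
        rw [Finset.card_univ, Fintype.card_fin]
        exact hRe.2.1
      have hinj := Finset.card_image_iff.mp h'
      intro a b hab
      exact hinj (by simp) (by simp) hab
    have hsing : R ∩ C = {A (Fin.last n, Fin.last n)} := by
      obtain ⟨x, hx⟩ := Finset.card_eq_one.mp hRe.2.2
      have hmem : A (Fin.last n, Fin.last n) ∈ ({x} : Finset S) :=
        hx ▸ Finset.mem_inter.mpr ⟨htR, htC⟩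
      rw [Finset.mem_singleton] at hmem
      rw [hx, hmem]
    have hcne : ∀ i : Fin n, A (i.castSucc, Fin.last n) ≠ A (Fin.last n, Fin.last n) :=
      fun i h => (Fin.castSucc_lt_last i).ne (hcol h)
    have hrne : ∀ i : Fin n, A (Fin.last n, (σ i).castSucc) ≠ A (Fin.last n, Fin.last n) :=
      fun i h => (Fin.castSucc_lt_last (σ i)).ne (hrow h)
    have hcr : ∀ i j : Fin n, A (i.castSucc, Fin.last n) ≠ A (Fin.last n, (σ j).castSucc) := by
      intro i j h
      have hmR : A (i.castSucc, Fin.last n) ∈ R := by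
        rw [h]
        exact Finset.mem_image.mpr ⟨(σ j).castSucc, Finset.mem_univ _, rfl⟩
      have hmC : A (i.castSucc, Fin.last n) ∈ C :=
        Finset.mem_image.mpr ⟨i.castSucc, Finset.mem_univ _, rfl⟩
      have hmem : A (i.castSucc, Fin.last n) ∈ R ∩ C := Finset.mem_inter.mpr ⟨hmR, hmC⟩
      rw [hsing, Finset.mem_singleton] at hmem
      exact hcne i hmem
    have H : ∀ i : Fin n, ∃ m : Fin n, m ≠ m₀ ∧
        (A (i.castSucc, Fin.last n) = A (m.castSucc, (σ m).castSucc) ∨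
         A (Fin.last n, (σ i).castSucc) = A (m.castSucc, (σ m).castSucc)) := by
      intro i
      rcases collide A hfree σ hσ i with ⟨m, -, h⟩ | ⟨m, -, h⟩ | h
      · refine ⟨m, ?_, Or.inl h⟩
        rintro rfl
        exact hcne i (h.trans hm₀.symm)
      · refine ⟨m, ?_, Or.inr h⟩
        rintro rfl
        exact hrne i (h.trans hm₀.symm)
      · exact absurd h (hcr i i)
    choose F hFne hFor using H
    have hFinj : Function.Injective F := by
      intro i j hij
      rcases hFor i with hi | hi <;> rcases hFor j with hj | hj <;> rw [hij] at hi
      · exact Fin.castSucc_inj.mp (hcol (hi.trans hj.symm))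
      · exact absurd (hi.trans hj.symm) (hcr i j)
      · exact absurd (hj.trans hi.symm) (hcr j i)
      · exact σ.injective (Fin.castSucc_inj.mp (hrow (hi.trans hj.symm)))
    obtain ⟨i, hi⟩ := Finite.injective_iff_surjective.mp hFinj m₀
    exact hFne i hi
end

section
/- Let A be an n×n array with at least βn² distinct symbols, and suppose row i contains d ≥ 1 clones (symbols occurring more than once in A). Then there exists a column j with A_{ij} a clone such that |R_i(A) ∪ C_j(A)| ≥ |R_i(A)| + (βn² − (n−d)(n−1) − |R_i(A)|)/d. -/
theorem good_col {S : Type*} [DecidableEq S] (n : ℕ) (β : ℝ) (hβ : 0 ≤ β)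
    (A : Fin n × Fin n → S)
    (hsym : β * n ^ 2 ≤ (numSymbols A : ℝ))
    (i : Fin n) (d : ℕ)
    (hd : d = (Finset.univ.filter fun j : Fin n =>
      1 < (Finset.univ.filter fun p : Fin n × Fin n => A p = A (i, j)).card).card)
    (hd1 : 1 ≤ d) :
    ∃ j : Fin n,
      1 < (Finset.univ.filter fun p : Fin n × Fin n => A p = A (i, j)).card ∧
      (((Finset.univ.image fun j' => A (i, j')) ∪
        (Finset.univ.image fun i' => A (i', j))).card : ℝ) ≥
        ((Finset.univ.image fun j' => A (i, j')).card : ℝ) +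
          (β * n ^ 2 - ((n : ℝ) - d) * ((n : ℝ) - 1)
            - ((Finset.univ.image fun j' => A (i, j')).card : ℝ)) / d := by
  classical
  set R : Finset S := Finset.univ.image fun j' => A (i, j') with hR
  set D : Finset (Fin n) := Finset.univ.filter fun j : Fin n =>
      1 < (Finset.univ.filter fun p : Fin n × Fin n => A p = A (i, j)).card with hDdef
  have hDcard : D.card = d := hd.symm
  have hdn : d ≤ n := by
    rw [hd]
    simpa using Finset.card_filter_le (Finset.univ : Finset (Fin n)) _
  have hn1 : 1 ≤ n := le_trans hd1 hdn
  set f : Fin n → Finset S := fun j => (Finset.univ.image fun i' => A (i', j)) \ R with hf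
  have hsub : Finset.univ.image A ⊆ (R ∪ D.biUnion f) ∪
      ((Finset.univ.filter (fun p : Fin n × Fin n => p.1 ≠ i ∧ p.2 ∉ D)).image A) := by
    intro s hs
    obtain ⟨p, -, rfl⟩ := Finset.mem_image.mp hs
    by_cases hRmem : A p ∈ R
    · exact Finset.mem_union_left _ (Finset.mem_union_left _ hRmem)
    by_cases hDmem : p.2 ∈ D
    · refine Finset.mem_union_left _ (Finset.mem_union_right _ ?_)
      refine Finset.mem_biUnion.mpr ⟨p.2, hDmem, ?_⟩
      refine Finset.mem_sdiff.mpr ⟨Finset.mem_image.mpr ⟨p.1, Finset.mem_univ _, ?_⟩, hRmem⟩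
      rw [Prod.mk.eta]
    · refine Finset.mem_union_right _ (Finset.mem_image.mpr ⟨p, ?_, rfl⟩)
      refine Finset.mem_filter.mpr ⟨Finset.mem_univ _, ?_, hDmem⟩
      intro hpi
      refine hRmem (Finset.mem_image.mpr ⟨p.2, Finset.mem_univ _, ?_⟩)
      rw [← hpi, Prod.mk.eta]
  have hfilt : (Finset.univ.filter (fun p : Fin n × Fin n => p.1 ≠ i ∧ p.2 ∉ D)) ⊆
      (({i}ᶜ : Finset (Fin n)) ×ˢ (Dᶜ : Finset (Fin n))) := by
    intro p hp
    simp only [Finset.mem_filter] at hp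
    simp [Finset.mem_product, hp.2.1, hp.2.2]
  have hprodcard : ((({i}ᶜ : Finset (Fin n)) ×ˢ (Dᶜ : Finset (Fin n))).card : ℕ)
      = (n - 1) * (n - d) := by
    rw [Finset.card_product, Finset.card_compl, Finset.card_compl]
    simp [hDcard]
  have hcount : (Finset.univ.image A).card ≤
      R.card + (∑ j ∈ D, (f j).card) + (n - 1) * (n - d) := by
    calc (Finset.univ.image A).card
        ≤ ((R ∪ D.biUnion f) ∪
            ((Finset.univ.filter (fun p : Fin n × Fin n => p.1 ≠ i ∧ p.2 ∉ D)).image A)).card :=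
          Finset.card_le_card hsub
      _ ≤ (R ∪ D.biUnion f).card +
            ((Finset.univ.filter (fun p : Fin n × Fin n => p.1 ≠ i ∧ p.2 ∉ D)).image A).card :=
          Finset.card_union_le _ _
      _ ≤ (R.card + (D.biUnion f).card) +
            (Finset.univ.filter (fun p : Fin n × Fin n => p.1 ≠ i ∧ p.2 ∉ D)).card :=
          add_le_add (Finset.card_union_le _ _) (Finset.card_image_le)
      _ ≤ (R.card + ∑ j ∈ D, (f j).card) + (n - 1) * (n - d) := by
          refine add_le_add (add_le_add_right (Finset.card_biUnion_le) _) ?_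
          rw [← hprodcard]
          exact Finset.card_le_card hfilt
  have hdpos : (0 : ℝ) < (d : ℝ) := by exact_mod_cast hd1
  have hTreal : β * n ^ 2 - ((n : ℝ) - d) * ((n : ℝ) - 1) - (R.card : ℝ)
      ≤ ∑ j ∈ D, ((f j).card : ℝ) := by
    have h1 : (numSymbols A : ℝ) ≤
        (R.card : ℝ) + (∑ j ∈ D, ((f j).card : ℝ)) + ((n : ℝ) - 1) * ((n : ℝ) - d) := by
      have h2 : ((Finset.univ.image A).card : ℝ) ≤
          (R.card : ℝ) + (∑ j ∈ D, ((f j).card : ℝ)) + (((n - 1) * (n - d) : ℕ) : ℝ) := by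
        exact_mod_cast hcount
      push_cast [Nat.cast_sub hn1, Nat.cast_sub hdn] at h2
      unfold numSymbols
      linarith [h2]
    nlinarith [hsym]
  have hDne : D.Nonempty := Finset.card_pos.mp (by omega)
  have havg : ∑ _j ∈ D, ((β * n ^ 2 - ((n : ℝ) - d) * ((n : ℝ) - 1) - (R.card : ℝ)) / d)
      ≤ ∑ j ∈ D, ((f j).card : ℝ) := by
    rw [Finset.sum_const, hDcard, nsmul_eq_mul, mul_div_cancel₀ _ (ne_of_gt hdpos)]
    exact hTreal
  obtain ⟨j, hjD, hj⟩ := Finset.exists_le_of_sum_le hDne havg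
  have hjclone : 1 < (Finset.univ.filter fun p : Fin n × Fin n => A p = A (i, j)).card := by
    have := hjD
    rw [hDdef, Finset.mem_filter] at this
    exact this.2
  refine ⟨j, hjclone, ?_⟩
  have hcardu : (R ∪ (Finset.univ.image fun i' => A (i', j))).card = R.card + (f j).card := by
    rw [hf]
    rw [← Finset.union_sdiff_self_eq_union]
    exact Finset.card_union_of_disjoint Finset.disjoint_sdiff
  rw [hcardu]
  push_cast
  linarith [hj]
end

section
/- Let A be an n×n transversal-free array, and suppose every transversal-free array of order n−1 of the same class (Latin, or row-Latin) has fewer than α(n−1)² distinct symbols, where A has at least αn² distinct symbols and 1/2 ≤ α ≤ 1. If A_{ij} is a singleton, then the number of symbols appearing in A but not in A with row i and column j deleted exceeds α(2n−1), and row i contains more than (2α−1)n symbols that appear only in row i of A. -/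
def delArr {S : Type*} {m : ℕ} (A : Fin (m + 1) × Fin (m + 1) → S)
    (i j : Fin (m + 1)) : Fin m × Fin m → S :=
  fun p => A (i.succAbove p.1, j.succAbove p.2)

theorem uniquemin {S : Type*} [DecidableEq S] (m : ℕ) (α : ℝ)
    (hα : 1 / 2 ≤ α) (hα1 : α ≤ 1)
    (A : Fin (m + 1) × Fin (m + 1) → S)
    (hfree : ¬ HasTransversal A)
    (hsym : α * (m + 1) ^ 2 ≤ (numSymbols A : ℝ))
    (hclass :
      (IsLatin A ∧ ∀ B : Fin m × Fin m → S, IsLatin B → ¬ HasTransversal B →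
        (numSymbols B : ℝ) < α * m ^ 2) ∨
      (IsRowLatin A ∧ ∀ B : Fin m × Fin m → S, IsRowLatin B → ¬ HasTransversal B →
        (numSymbols B : ℝ) < α * m ^ 2))
    (i j : Fin (m + 1))
    (hsingle : (Finset.univ.filter fun p : Fin (m + 1) × Fin (m + 1) =>
      A p = A (i, j)).card = 1) :
    ((((Finset.univ.image A) \ (Finset.univ.image (delArr A i j))).card : ℝ) >
        α * (2 * (m + 1) - 1)) ∧
    ((((Finset.univ.image fun j' => A (i, j')).filter fun s =>
        ∀ p : Fin (m + 1) × Fin (m + 1), A p = s → p.1 = i).card : ℝ) >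
        (2 * α - 1) * (m + 1)) := by
  classical
  have huniq : ∀ p : Fin (m+1) × Fin (m+1), A p = A (i, j) → p = (i, j) := by
    intro p hp
    obtain ⟨a, ha⟩ := Finset.card_eq_one.mp hsingle
    have h1 : p ∈ Finset.univ.filter fun p : Fin (m+1) × Fin (m+1) => A p = A (i,j) := by
      simp [hp]
    have h2 : (i,j) ∈ Finset.univ.filter fun p : Fin (m+1) × Fin (m+1) => A p = A (i,j) := by
      simp
    rw [ha, Finset.mem_singleton] at h1 h2
    rw [h1, h2]
  set B := delArr A i j with hBdef
  -- B is transversal-free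
  have hBfree : ¬ HasTransversal B := by
    rintro ⟨σ, hσ⟩
    apply hfree
    refine ⟨(finSuccEquiv' i).trans ((Equiv.optionCongr σ).trans (finSuccEquiv' j).symm), ?_⟩
    set τ := (finSuccEquiv' i).trans ((Equiv.optionCongr σ).trans (finSuccEquiv' j).symm) with hτ
    have hτi : τ i = j := by
      simp [hτ, finSuccEquiv'_at, finSuccEquiv'_symm_none]
    have hτs : ∀ k : Fin m, τ (i.succAbove k) = j.succAbove (σ k) := by
      intro k
      simp [hτ, finSuccEquiv'_succAbove, finSuccEquiv'_symm_some]
    intro r₁ r₂ h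
    simp only at h
    by_cases h1 : r₁ = i <;> by_cases h2 : r₂ = i
    · rw [h1, h2]
    · obtain ⟨k, hk⟩ := Fin.exists_succAbove_eq h2
      exfalso
      rw [h1, hτi] at h
      have := huniq (r₂, τ r₂) h.symm
      exact h2 (congrArg Prod.fst this)
    · obtain ⟨k, hk⟩ := Fin.exists_succAbove_eq h1
      exfalso
      rw [h2, hτi] at h
      have := huniq (r₁, τ r₁) h
      exact h1 (congrArg Prod.fst this)
    · obtain ⟨k₁, hk₁⟩ := Fin.exists_succAbove_eq h1
      obtain ⟨k₂, hk₂⟩ := Fin.exists_succAbove_eq h2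
      rw [← hk₁, ← hk₂, hτs, hτs] at h
      have : k₁ = k₂ := hσ h
      rw [← hk₁, ← hk₂, this]
  -- B has few symbols
  have hBsym : (numSymbols B : ℝ) < α * m ^ 2 := by
    rcases hclass with ⟨hL, hmin⟩ | ⟨hL, hmin⟩
    · refine hmin B ?_ hBfree
      constructor
      · intro k a b hab
        exact Fin.succAbove_right_injective (hL.1 (i.succAbove k) hab)
      · intro k a b hab
        exact Fin.succAbove_right_injective (hL.2 (j.succAbove k) hab)
    · refine hmin B ?_ hBfree
      intro k a b hab
      exact Fin.succAbove_right_injective (hL (i.succAbove k) hab)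
  have hsub : Finset.univ.image B ⊆ Finset.univ.image A := by
    intro s hs
    simp only [Finset.mem_image, Finset.mem_univ, true_and] at hs ⊢
    obtain ⟨p, hp⟩ := hs
    exact ⟨(i.succAbove p.1, j.succAbove p.2), hp⟩
  have hle : (Finset.univ.image B).card ≤ (Finset.univ.image A).card :=
    Finset.card_le_card hsub
  have hcard : ((Finset.univ.image A) \ (Finset.univ.image B)).card
      = (Finset.univ.image A).card - (Finset.univ.image B).card :=
    Finset.card_sdiff_of_subset hsub
  have hΨcard : (((Finset.univ.image A) \ (Finset.univ.image B)).card : ℝ)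
      = (numSymbols A : ℝ) - (numSymbols B : ℝ) := by
    rw [hcard]
    push_cast [Nat.cast_sub hle]
    rfl
  have key1 : (((Finset.univ.image A) \ (Finset.univ.image B)).card : ℝ)
      > α * (2 * (m + 1) - 1) := by
    rw [hΨcard]
    have : α * ((m:ℝ) + 1) ^ 2 - α * (m:ℝ) ^ 2 = α * (2 * ((m:ℝ) + 1) - 1) := by ring
    push_cast at hsym ⊢
    nlinarith [hBsym, hsym]
  refine ⟨key1, ?_⟩
  set Ψ := (Finset.univ.image A) \ (Finset.univ.image B) with hΨ
  set T := (Finset.univ.image fun j' => A (i, j')).filter fun s =>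
      ∀ p : Fin (m + 1) × Fin (m + 1), A p = s → p.1 = i with hT
  have hwit : ∀ s ∈ Ψ \ T, ∃ p : Fin (m+1) × Fin (m+1), A p = s ∧ p.1 ≠ i ∧ p.2 = j := by
    intro s hs
    obtain ⟨hsΨ, hsT⟩ := Finset.mem_sdiff.mp hs
    obtain ⟨hsA, hsB⟩ := Finset.mem_sdiff.mp hsΨ
    obtain ⟨p, -, hp⟩ := Finset.mem_image.mp hsA
    by_cases hall : ∀ q : Fin (m+1) × Fin (m+1), A q = s → q.1 = i
    · exfalso
      apply hsT
      rw [hT, Finset.mem_filter]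
      refine ⟨?_, hall⟩
      refine Finset.mem_image.mpr ⟨p.2, Finset.mem_univ _, ?_⟩
      have : p.1 = i := hall p hp
      rw [← this, ← hp]
    · push_neg at hall
      obtain ⟨q, hq1, hq2⟩ := hall
      refine ⟨q, hq1, hq2, ?_⟩
      by_contra hq3
      apply hsB
      obtain ⟨k₁, hk₁⟩ := Fin.exists_succAbove_eq hq2
      obtain ⟨k₂, hk₂⟩ := Fin.exists_succAbove_eq hq3
      refine Finset.mem_image.mpr ⟨(k₁, k₂), Finset.mem_univ _, ?_⟩
      show A (i.succAbove k₁, j.succAbove k₂) = s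
      rw [hk₁, hk₂, ← hq1]
  have hsdcard : (Ψ \ T).card ≤ m := by
    have : (Ψ \ T).card ≤ (Finset.univ.erase i).card := by
      apply Finset.card_le_card_of_injOn
        (fun s => if h : ∃ p : Fin (m+1) × Fin (m+1), A p = s ∧ p.1 ≠ i ∧ p.2 = j
          then h.choose.1 else i)
      · intro s hs
        obtain ⟨p, hp⟩ := hwit s hs
        have hex : ∃ p : Fin (m+1) × Fin (m+1), A p = s ∧ p.1 ≠ i ∧ p.2 = j := ⟨p, hp⟩
        simp only [dif_pos hex]
        exact Finset.mem_erase.mpr ⟨hex.choose_spec.2.1, Finset.mem_univ _⟩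
      · intro s₁ h₁ s₂ h₂ heq
        have hex₁ : ∃ p : Fin (m+1) × Fin (m+1), A p = s₁ ∧ p.1 ≠ i ∧ p.2 = j := hwit s₁ h₁
        have hex₂ : ∃ p : Fin (m+1) × Fin (m+1), A p = s₂ ∧ p.1 ≠ i ∧ p.2 = j := hwit s₂ h₂
        simp only [dif_pos hex₁, dif_pos hex₂] at heq
        have hp₁ := hex₁.choose_spec
        have hp₂ := hex₂.choose_spec
        have : hex₁.choose = hex₂.choose := by
          apply Prod.ext heq
          rw [hp₁.2.2, hp₂.2.2]
        rw [← hp₁.1, ← hp₂.1, this]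
    simpa using this
  have hΨT : Ψ.card ≤ T.card + m := by
    have h1 : (Ψ ∩ T).card + (Ψ \ T).card = Ψ.card := Finset.card_inter_add_card_sdiff Ψ T
    have h2 : (Ψ ∩ T).card ≤ T.card := Finset.card_le_card (Finset.inter_subset_right)
    omega
  have hΨTr : (Ψ.card : ℝ) ≤ (T.card : ℝ) + m := by exact_mod_cast hΨT
  have : (Ψ.card : ℝ) > α * (2 * (m + 1) - 1) := key1
  push_cast at hΨTr this ⊢
  nlinarith [this, hΨTr, hα1]
end

section
/- Every 4×4 Latin array with at least 6 distinct symbols has a transversal. -/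
open Fin.NatCast

/-- The set of injective functions `Fin 4 → Fin 4`. -/
def Bad : Finset (Fin 4 → Fin 4) := Finset.univ.filter Function.Injective

/-- "`g` agrees with the identity on at least two of the first `k` points". -/
def Pk (k : ℕ) (g : Fin 4 → Fin 4) : Prop :=
  ∃ i j : Fin k, i ≠ j ∧ g ((i : ℕ) : Fin 4) = ((i : ℕ) : Fin 4) ∧
    g ((j : ℕ) : Fin 4) = ((j : ℕ) : Fin 4)

instance (k : ℕ) : DecidablePred (Pk k) := fun g => by unfold Pk; infer_instance

lemma exists_perm_extend {k : ℕ} (hk : k ≤ 4) (a : Fin k → Fin 4) (ha : Function.Injective a) :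
    ∃ π : Equiv.Perm (Fin 4), ∀ i : Fin k, π ((i : ℕ) : Fin 4) = a i := by
  classical
  set ι : Fin k → Fin 4 := fun i => ((i : ℕ) : Fin 4) with hι
  have hinj : Function.Injective ι := by
    intro i j h
    apply Fin.ext
    have hi : ((((i : ℕ)) : Fin 4) : ℕ) = (i : ℕ) := Fin.val_cast_of_lt (lt_of_lt_of_le i.isLt hk)
    have hj : ((((j : ℕ)) : Fin 4) : ℕ) = (j : ℕ) := Fin.val_cast_of_lt (lt_of_lt_of_le j.isLt hk)
    have := congrArg Fin.val h
    simpa [hι, hi, hj] using this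
  let e := (Equiv.ofInjective ι hinj).symm.trans (Equiv.ofInjective a ha)
  refine ⟨e.extendSubtype, fun i => ?_⟩
  have hmem : ι i ∈ Set.range ι := ⟨i, rfl⟩
  have h0 : (((i : ℕ)) : Fin 4) = ι i := rfl
  rw [h0, Equiv.extendSubtype_apply_of_mem e (ι i) hmem]
  have h1 : (Equiv.ofInjective ι hinj).symm ⟨ι i, hmem⟩ = i := by
    rw [Equiv.symm_apply_eq]
    exact Subtype.ext rfl
  show ((Equiv.ofInjective a ha) ((Equiv.ofInjective ι hinj).symm ⟨ι i, hmem⟩) : Fin 4) = a i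
  rw [h1]
  rfl

lemma card_conj (π ρ : Equiv.Perm (Fin 4)) (P : (Fin 4 → Fin 4) → Prop) [DecidablePred P] :
    (Bad.filter fun f => P (ρ ∘ f ∘ π)).card = (Bad.filter P).card := by
  apply Finset.card_bij (fun f _ => ρ ∘ f ∘ π)
  · intro f hf
    simp only [Bad, Finset.mem_filter, Finset.mem_univ, true_and] at hf ⊢
    exact ⟨ρ.injective.comp (hf.1.comp π.injective), hf.2⟩
  · intro f hf f' hf' h
    funext x
    have := congrFun h (π.symm x)
    simp only [Function.comp_apply, Equiv.apply_symm_apply] at this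
    exact ρ.injective this
  · intro g hg
    refine ⟨(ρ.symm : Fin 4 → Fin 4) ∘ g ∘ (π.symm : Fin 4 → Fin 4), ?_, ?_⟩
    · simp only [Bad, Finset.mem_filter, Finset.mem_univ, true_and] at hg ⊢
      refine ⟨ρ.symm.injective.comp (hg.1.comp π.symm.injective), ?_⟩
      have : (ρ : Fin 4 → Fin 4) ∘ ((ρ.symm : Fin 4 → Fin 4) ∘ g ∘ (π.symm : Fin 4 → Fin 4)) ∘
          (π : Fin 4 → Fin 4) = g := by funext x; simp
      rw [this]; exact hg.2
    · funext x; simp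

lemma Bad_card : Bad.card = 24 := by decide

lemma final_step (N k : ℕ) (hk1 : 1 ≤ k) (hk4 : k ≤ 4)
    (h : N ≤ (Bad.filter (Pk k)).card) :
    N + 2 ≤ 2 * k + (if k = 4 then 1 else 0) := by
  interval_cases k
  · have h1 : (Bad.filter (Pk 1)).card = 0 := by decide
    omega
  · have h1 : (Bad.filter (Pk 2)).card = 2 := by decide
    omega
  · have h1 : (Bad.filter (Pk 3)).card = 4 := by decide
    omega
  · have h1 : (Bad.filter (Pk 4)).card = 7 := by decide
    norm_num
    omega

/-- Key per-symbol bound. -/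
lemma classBound {S : Type*} [DecidableEq S] (A : Fin 4 × Fin 4 → S) (hA : IsLatin A)
    (v : S) (hv : v ∈ Finset.univ.image A) :
    (Bad.filter fun f => ∃ i j : Fin 4, i ≠ j ∧ A (i, f i) = v ∧ A (j, f j) = v).card + 2
      ≤ 2 * (Finset.univ.filter fun c : Fin 4 × Fin 4 => A c = v).card +
        (if (Finset.univ.filter fun c : Fin 4 × Fin 4 => A c = v).card = 4 then 1 else 0) := by
  classical
  set s : Finset (Fin 4 × Fin 4) := Finset.univ.filter fun c => A c = v with hs
  have hmem : ∀ c ∈ s, A c = v := by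
    intro c hc; simpa [hs] using hc
  have hrow : ∀ c ∈ s, ∀ c' ∈ s, c.1 = c'.1 → c = c' := by
    intro c hc c' hc' h
    have h2 : A (c.1, c.2) = A (c.1, c'.2) := by
      rw [Prod.mk.eta, h, Prod.mk.eta, hmem c hc, hmem c' hc']
    exact Prod.ext h (hA.1 c.1 h2)
  have hcol : ∀ c ∈ s, ∀ c' ∈ s, c.2 = c'.2 → c = c' := by
    intro c hc c' hc' h
    have h2 : A (c.1, c.2) = A (c'.1, c.2) := by
      rw [Prod.mk.eta, h, Prod.mk.eta, hmem c hc, hmem c' hc']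
    exact Prod.ext (hA.2 c.2 h2) h
  have hk4 : s.card ≤ 4 := by
    have := Finset.card_le_card_of_injOn (f := Prod.fst) (t := (Finset.univ : Finset (Fin 4)))
      (fun c _ => Finset.mem_univ _) (fun c hc c' hc' h => hrow c hc c' hc' h)
    simpa using this
  have hk1 : 1 ≤ s.card := by
    obtain ⟨c, _, hc⟩ := Finset.mem_image.1 hv
    exact Finset.card_pos.2 ⟨c, by simp [hs, hc]⟩
  set k := s.card with hkdef
  set E := s.equivFin with hE
  set cell : Fin k → Fin 4 × Fin 4 := fun i => (E.symm i : Fin 4 × Fin 4) with hcelldef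
  have hcell : ∀ i, cell i ∈ s := fun i => (E.symm i).2
  have hcinj : Function.Injective cell := by
    intro i j h
    have : E.symm i = E.symm j := Subtype.ext h
    exact E.symm.injective this
  have ha : Function.Injective fun i => (cell i).1 := by
    intro i j h
    exact hcinj (hrow _ (hcell i) _ (hcell j) h)
  have hb : Function.Injective fun i => (cell i).2 := by
    intro i j h
    exact hcinj (hcol _ (hcell i) _ (hcell j) h)
  obtain ⟨π, hπ⟩ := exists_perm_extend hk4 _ ha
  obtain ⟨ρ0, hρ0⟩ := exists_perm_extend hk4 _ hb
  have hsub : (Bad.filter fun f => ∃ i j : Fin 4, i ≠ j ∧ A (i, f i) = v ∧ A (j, f j) = v)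
      ⊆ Bad.filter fun f => Pk k ((ρ0.symm : Fin 4 → Fin 4) ∘ f ∘ (π : Fin 4 → Fin 4)) := by
    intro f hf
    rw [Finset.mem_filter] at hf ⊢
    obtain ⟨hfB, i, j, hij, hvi, hvj⟩ := hf
    refine ⟨hfB, ?_⟩
    have hCi : ((i, f i) : Fin 4 × Fin 4) ∈ s := by simp [hs, hvi]
    have hCj : ((j, f j) : Fin 4 × Fin 4) ∈ s := by simp [hs, hvj]
    refine ⟨E ⟨(i, f i), hCi⟩, E ⟨(j, f j), hCj⟩, ?_, ?_, ?_⟩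
    · intro h
      apply hij
      have h2 := E.injective h
      exact congrArg Prod.fst (congrArg Subtype.val h2)
    · set p := E ⟨(i, f i), hCi⟩ with hp
      have hcp : cell p = (i, f i) := by simp [hcelldef, hp]
      have hap : π ((p : ℕ) : Fin 4) = i := by rw [hπ p, hcp]
      have hbp : (ρ0.symm : Fin 4 → Fin 4) (f i) = ((p : ℕ) : Fin 4) := by
        have := hρ0 p
        rw [hcp] at this
        exact (Equiv.symm_apply_eq ρ0).2 this.symm
      simp only [Function.comp_apply, hap, hbp]
    · set q := E ⟨(j, f j), hCj⟩ with hq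
      have hcq : cell q = (j, f j) := by simp [hcelldef, hq]
      have haq : π ((q : ℕ) : Fin 4) = j := by rw [hπ q, hcq]
      have hbq : (ρ0.symm : Fin 4 → Fin 4) (f j) = ((q : ℕ) : Fin 4) := by
        have := hρ0 q
        rw [hcq] at this
        exact (Equiv.symm_apply_eq ρ0).2 this.symm
      simp only [Function.comp_apply, haq, hbq]
  have hcard : (Bad.filter fun f => ∃ i j : Fin 4, i ≠ j ∧ A (i, f i) = v ∧ A (j, f j) = v).card
      ≤ (Bad.filter (Pk k)).card := by
    calc _ ≤ (Bad.filter fun f => Pk k ((ρ0.symm : Fin 4 → Fin 4) ∘ f ∘ (π : Fin 4 → Fin 4))).card :=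
          Finset.card_le_card hsub
      _ = (Bad.filter (Pk k)).card := card_conj π ρ0.symm (Pk k)
  exact final_step _ k hk1 hk4 hcard

set_option maxHeartbeats 1000000 in
theorem latin4_six_symbols_transversal {S : Type*} [DecidableEq S]
    (A : Fin 4 × Fin 4 → S) (hA : IsLatin A) (hsym : 6 ≤ numSymbols A) :
    HasTransversal A := by
  by_contra hT
  -- every injective f : Fin 4 → Fin 4 is blocked by some symbol
  have hBad0 : ∀ f ∈ Bad, ∃ v ∈ Finset.univ.image A,
      ∃ i j : Fin 4, i ≠ j ∧ A (i, f i) = v ∧ A (j, f j) = v := by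
    intro f hf
    have hinj : Function.Injective f := by simpa [Bad] using hf
    have hbij := Finite.injective_iff_bijective.1 hinj
    have hni : ¬ Function.Injective fun i => A (i, f i) := by
      intro h
      exact hT ⟨Equiv.ofBijective f hbij, h⟩
    rw [Function.not_injective_iff] at hni
    obtain ⟨a, b, hab, hne⟩ := hni
    exact ⟨A (a, f a), Finset.mem_image.2 ⟨(a, f a), Finset.mem_univ _, rfl⟩,
      a, b, hne, rfl, hab.symm⟩
  have hsum16 : ∑ v ∈ Finset.univ.image A,
      (Finset.univ.filter fun c : Fin 4 × Fin 4 => A c = v).card = 16 := by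
    have h := Finset.card_eq_sum_card_image A (Finset.univ : Finset (Fin 4 × Fin 4))
    simpa using h.symm
  have hC : ∀ v ∈ Finset.univ.image A,
      (Bad.filter fun f => ∃ i j : Fin 4, i ≠ j ∧ A (i, f i) = v ∧ A (j, f j) = v).card + 2
        ≤ 2 * (Finset.univ.filter fun c : Fin 4 × Fin 4 => A c = v).card
          + (if (Finset.univ.filter fun c : Fin 4 × Fin 4 => A c = v).card = 4 then 1 else 0) :=
    fun v hv => classBound A hA v hv
  have hone : ∀ v ∈ Finset.univ.image A,
      1 + 3 * (if (Finset.univ.filter fun c : Fin 4 × Fin 4 => A c = v).card = 4 then 1 else 0)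
        ≤ (Finset.univ.filter fun c : Fin 4 × Fin 4 => A c = v).card := by
    intro v hv
    obtain ⟨c, _, hc⟩ := Finset.mem_image.1 hv
    have h1 : 1 ≤ (Finset.univ.filter fun c : Fin 4 × Fin 4 => A c = v).card :=
      Finset.card_pos.2 ⟨c, by simp [hc]⟩
    by_cases h : (Finset.univ.filter fun c : Fin 4 × Fin 4 => A c = v).card = 4
    · rw [if_pos h]; omega
    · rw [if_neg h]; omega
  have hsuma : ∑ v ∈ Finset.univ.image A,
      (if (Finset.univ.filter fun c : Fin 4 × Fin 4 => A c = v).card = 4 then 1 else 0)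
      = ((Finset.univ.image A).filter fun v =>
          (Finset.univ.filter fun c : Fin 4 × Fin 4 => A c = v).card = 4).card :=
    (Finset.card_filter _ _).symm
  have h24 : 24 ≤ ∑ v ∈ Finset.univ.image A,
      (Bad.filter fun f => ∃ i j : Fin 4, i ≠ j ∧ A (i, f i) = v ∧ A (j, f j) = v).card := by
    have hkey : ∀ f ∈ Bad, 1 ≤ ∑ v ∈ Finset.univ.image A,
        (if ∃ i j : Fin 4, i ≠ j ∧ A (i, f i) = v ∧ A (j, f j) = v then 1 else 0) := by
      intro f hf
      obtain ⟨v, hv, hq⟩ := hBad0 f hf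
      calc (1 : ℕ) = (if ∃ i j : Fin 4, i ≠ j ∧ A (i, f i) = v ∧ A (j, f j) = v
              then 1 else 0) := by rw [if_pos hq]
        _ ≤ _ := Finset.single_le_sum (f := fun v =>
              (if ∃ i j : Fin 4, i ≠ j ∧ A (i, f i) = v ∧ A (j, f j) = v then 1 else 0))
              (fun _ _ => Nat.zero_le _) hv
    calc (24 : ℕ) = ∑ _f ∈ Bad, 1 := by rw [Finset.sum_const, smul_eq_mul, mul_one, Bad_card]
      _ ≤ ∑ f ∈ Bad, ∑ v ∈ Finset.univ.image A,
            (if ∃ i j : Fin 4, i ≠ j ∧ A (i, f i) = v ∧ A (j, f j) = v then 1 else 0) :=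
          Finset.sum_le_sum hkey
      _ = ∑ v ∈ Finset.univ.image A, ∑ f ∈ Bad,
            (if ∃ i j : Fin 4, i ≠ j ∧ A (i, f i) = v ∧ A (j, f j) = v then 1 else 0) :=
          Finset.sum_comm
      _ = ∑ v ∈ Finset.univ.image A,
            (Bad.filter fun f => ∃ i j : Fin 4, i ≠ j ∧ A (i, f i) = v ∧ A (j, f j) = v).card := by
          refine Finset.sum_congr rfl fun v _ => ?_
          rw [Finset.card_filter]
  have H1 := Finset.sum_le_sum hC
  rw [Finset.sum_add_distrib, Finset.sum_const, Finset.sum_add_distrib, hsuma,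
    ← Finset.mul_sum, hsum16] at H1
  have H2 := Finset.sum_le_sum hone
  rw [Finset.sum_add_distrib, Finset.sum_const, ← Finset.mul_sum, hsuma, hsum16] at H2
  simp only [smul_eq_mul, mul_one] at H1 H2
  obtain ⟨SB, m, a, g1, g2, g3, g4⟩ :
      ∃ SB m a : ℕ, 24 ≤ SB ∧ SB + m * 2 ≤ 2 * 16 + a ∧ m + 3 * a ≤ 16 ∧ 6 ≤ m :=
    ⟨_, _, _, h24, H1, H2, hsym⟩
  clear * - g1 g2 g3 g4
  omega
end

section
/- Let L₀ be the 6×6 Latin square over Z₃×Z₂ defined with rows indexed 1..6 by rows (a,b,c,d,e,f),(b,c,a,e,f,d),(c,a,b,f,d,e),(d,e,f,a,c,b),(e,f,d,c,b,a),(f,d,e,b,a,c), and let L be obtained from L₀ by replacing any subset of the occurrences of the symbol d by a new symbol g. Then L has no transversal. -/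
def m6 : Fin 6 → Fin 6 → Fin 7 :=
  ![![0, 1, 2, 3, 4, 5], ![1, 2, 0, 4, 5, 3], ![2, 0, 1, 5, 3, 4],
    ![3, 4, 5, 0, 2, 1], ![4, 5, 3, 2, 1, 0], ![5, 3, 4, 1, 0, 2]]

set_option maxHeartbeats 4000000 in
set_option maxRecDepth 10000 in
theorem keyL : ∀ l ∈ (List.finRange 6).permutations',
    ∃ i j : Fin 6, i ≠ j ∧
      m6 i (l.getD i 0) = m6 j (l.getD j 0) ∧
      (m6 i (l.getD i 0) ≠ 3 ∨ ∃ k : Fin 6, k ≠ i ∧ k ≠ j ∧ m6 k (l.getD k 0) = 3) := by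
  decide

theorem keyP (σ : Equiv.Perm (Fin 6)) :
    ∃ i j : Fin 6, i ≠ j ∧
      m6 i (σ i) = m6 j (σ j) ∧
      (m6 i (σ i) ≠ 3 ∨ ∃ k : Fin 6, k ≠ i ∧ k ≠ j ∧ m6 k (σ k) = 3) := by
  have hmem : (List.finRange 6).map σ ∈ (List.finRange 6).permutations' :=
    List.mem_permutations'.2 (Equiv.Perm.map_finRange_perm σ)
  have hgd : ∀ i : Fin 6, ((List.finRange 6).map σ).getD i 0 = σ i := by
    intro i
    have hlen : (i : ℕ) < ((List.finRange 6).map σ).length := by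
      simp [i.is_lt]
    rw [List.getD_eq_getElem _ _ hlen]
    simp
  have := keyL _ hmem
  simpa only [hgd] using this

theorem delta_lemma_order6 (L : Fin 6 × Fin 6 → Fin 7)
    (hL : ∀ p : Fin 6 × Fin 6,
      L p = (!![0, 1, 2, 3, 4, 5; 1, 2, 0, 4, 5, 3; 2, 0, 1, 5, 3, 4;
                3, 4, 5, 0, 2, 1; 4, 5, 3, 2, 1, 0; 5, 3, 4, 1, 0, 2] :
        Matrix (Fin 6) (Fin 6) (Fin 7)) p.1 p.2 ∨
      ((!![0, 1, 2, 3, 4, 5; 1, 2, 0, 4, 5, 3; 2, 0, 1, 5, 3, 4;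
           3, 4, 5, 0, 2, 1; 4, 5, 3, 2, 1, 0; 5, 3, 4, 1, 0, 2] :
        Matrix (Fin 6) (Fin 6) (Fin 7)) p.1 p.2 = 3 ∧ L p = 6)) :
    ¬ HasTransversal L := by
  have hM : (!![0, 1, 2, 3, 4, 5; 1, 2, 0, 4, 5, 3; 2, 0, 1, 5, 3, 4;
                3, 4, 5, 0, 2, 1; 4, 5, 3, 2, 1, 0; 5, 3, 4, 1, 0, 2] :
        Matrix (Fin 6) (Fin 6) (Fin 7)) = Matrix.of m6 := by
    ext i j
    fin_cases i <;> fin_cases j <;> rfl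
  have hL' : ∀ p : Fin 6 × Fin 6, L p = m6 p.1 p.2 ∨ (m6 p.1 p.2 = 3 ∧ L p = 6) := by
    intro p
    have := hL p
    rwa [hM] at this
  -- in particular, if m6 ≠ 3 then L = m6
  have hfix : ∀ p : Fin 6 × Fin 6, m6 p.1 p.2 ≠ 3 → L p = m6 p.1 p.2 := by
    intro p hp
    rcases hL' p with h | ⟨h3, _⟩
    · exact h
    · exact absurd h3 hp
  have hflex : ∀ p : Fin 6 × Fin 6, m6 p.1 p.2 = 3 → L p = 3 ∨ L p = 6 := by
    intro p hp
    rcases hL' p with h | ⟨_, h6⟩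
    · exact Or.inl (h.trans hp)
    · exact Or.inr h6
  rintro ⟨σ, hinj⟩
  obtain ⟨i, j, hij, heq, hcase⟩ := keyP σ
  by_cases h3 : m6 i (σ i) = 3
  · -- the common value is 3; get a third cell with value 3 and pigeonhole in {3,6}
    rcases hcase with h | ⟨k, hki, hkj, hk3⟩
    · exact h h3
    · have hi : L (i, σ i) = 3 ∨ L (i, σ i) = 6 := hflex _ h3
      have hj : L (j, σ j) = 3 ∨ L (j, σ j) = 6 := hflex _ (heq ▸ h3)
      have hk : L (k, σ k) = 3 ∨ L (k, σ k) = 6 := hflex _ hk3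
      rcases hi with hi | hi <;> rcases hj with hj | hj <;> rcases hk with hk | hk
      · exact hij (hinj (hi.trans hj.symm))
      · exact hij (hinj (hi.trans hj.symm))
      · exact hki.symm (hinj (hi.trans hk.symm))
      · exact hkj.symm (hinj (hj.trans hk.symm))
      · exact hkj.symm (hinj (hj.trans hk.symm))
      · exact hki.symm (hinj (hi.trans hk.symm))
      · exact hij (hinj (hi.trans hj.symm))
      · exact hij (hinj (hi.trans hj.symm))
  · -- the common value is not 3, so L agrees with m6 at both cells
    have h3' : m6 j (σ j) ≠ 3 := heq ▸ h3
    have hi := hfix (i, σ i) h3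
    have hj := hfix (j, σ j) h3'
    exact hij (hinj (show L (i, σ i) = L (j, σ j) by rw [hi, hj]; exact heq))
end

section
/- Let L be an n×n row-Latin array (n ≥ 1) and suppose the set of columns containing a clone (a symbol occurring more than once in L) has size d ≤ n/2, and no column contains both a singleton and a clone. If the n×d subarray R consisting of these d columns contains a partial transversal of length d, then L has a transversal. -/
theorem rowLatin_clone_columns_extend {S : Type*} [DecidableEq S] (n : ℕ)
    (hn : 1 ≤ n) (L : Fin n × Fin n → S) (hrow : IsRowLatin L)
    (D : Finset (Fin n))
    (hD : D = Finset.univ.filter fun j : Fin n => ∃ i : Fin n,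
      1 < (Finset.univ.filter fun p : Fin n × Fin n => L p = L (i, j)).card)
    (hsize : 2 * D.card ≤ n)
    (hnomix : ∀ j : Fin n, ¬
      ((∃ i : Fin n, (Finset.univ.filter fun p : Fin n × Fin n =>
          L p = L (i, j)).card = 1) ∧
       (∃ i : Fin n, 1 < (Finset.univ.filter fun p : Fin n × Fin n =>
          L p = L (i, j)).card)))
    (hpt : ∃ s : Finset (Fin n × Fin n), s.card = D.card ∧ (∀ p ∈ s, p.2 ∈ D) ∧
      Set.InjOn Prod.fst (s : Set (Fin n × Fin n)) ∧ Set.InjOn Prod.snd (s : Set (Fin n × Fin n)) ∧ Set.InjOn L (s : Set (Fin n × Fin n))) :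
    HasTransversal L := by
 classical
  obtain ⟨s, hcard, hsD, hfst, hsnd, hLinj⟩ := hpt
  set A : Finset (Fin n) := s.image Prod.fst with hA
  have hAcard : A.card = D.card := by
    rw [hA, Finset.card_image_of_injOn hfst, hcard]
  have hpick : ∀ i ∈ A, ∃ p, p ∈ s ∧ p.1 = i := by
    intro i hi
    simpa [hA, Finset.mem_image] using hi
  choose pick hpick_mem hpick_fst using hpick
  have hccard : (Aᶜ : Finset (Fin n)).card = (Dᶜ : Finset (Fin n)).card := by
    simp [Finset.card_compl, hAcard]
  let e := Finset.equivOfCardEq hccard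
  let σf : Fin n → Fin n := fun i =>
    if h : i ∈ A then (pick i h).2
    else (e ⟨i, Finset.mem_compl.mpr h⟩ : Fin n)
  have hmemD : ∀ i (h : i ∈ A), σf i ∈ D := by
    intro i h
    simp only [σf, dif_pos h]
    exact hsD _ (hpick_mem i h)
  have hmemDc : ∀ i (h : i ∉ A), σf i ∉ D := by
    intro i h
    simp only [σf, dif_neg h]
    exact Finset.mem_compl.mp (e ⟨i, Finset.mem_compl.mpr h⟩).2
  have hcell : ∀ i (h : i ∈ A), (i, σf i) = pick i h := by
    intro i h
    have h2 : σf i = (pick i h).2 := by simp only [σf, dif_pos h]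
    exact Prod.ext (hpick_fst i h).symm h2
  have hinj : Function.Injective σf := by
    intro i i' hEq
    by_cases h1 : i ∈ A <;> by_cases h2 : i' ∈ A
    · have hEq' : (pick i h1).2 = (pick i' h2).2 := by
        simpa only [σf, dif_pos h1, dif_pos h2] using hEq
      have := hsnd (Finset.mem_coe.mpr (hpick_mem i h1))
        (Finset.mem_coe.mpr (hpick_mem i' h2)) hEq'
      rw [← hpick_fst i h1, ← hpick_fst i' h2, this]
    · exact absurd (hEq ▸ hmemD i h1) (hmemDc i' h2)
    · exact absurd (hEq ▸ hmemDc i h1) (not_not.mpr (hmemD i' h2))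
    · have : e ⟨i, Finset.mem_compl.mpr h1⟩ = e ⟨i', Finset.mem_compl.mpr h2⟩ := by
        apply Subtype.ext
        simpa only [σf, dif_neg h1, dif_neg h2] using hEq
      exact congrArg Subtype.val (e.injective this)
  -- key singleton fact
  have key : ∀ p q : Fin n × Fin n, p.2 ∉ D → p ≠ q → L p ≠ L q := by
    intro p q hp hpq hLeq
    rw [hD, Finset.mem_filter] at hp
    push_neg at hp
    have h1 := hp (Finset.mem_univ _) p.1
    have h2 : 1 < (Finset.univ.filter fun r : Fin n × Fin n => L r = L (p.1, p.2)).card := by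
      rw [Finset.one_lt_card_iff]
      refine ⟨p, q, ?_, ?_, hpq⟩
      · simp
      · simp [← hLeq]
    exact absurd h2 (not_lt.mpr h1)
  refine ⟨Equiv.ofBijective σf (Finite.injective_iff_bijective.mp hinj), ?_⟩
  intro i i' hL
  simp only [Equiv.ofBijective_apply] at hL
  by_contra hne
  by_cases h1 : i ∈ A
  · by_cases h2 : i' ∈ A
    · have : (i, σf i) = (i', σf i') := by
        apply hLinj
        · rw [hcell i h1]; exact Finset.mem_coe.mpr (hpick_mem i h1)
        · rw [hcell i' h2]; exact Finset.mem_coe.mpr (hpick_mem i' h2)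
        · exact hL
      exact hne (congrArg Prod.fst this)
    · exact key (i', σf i') (i, σf i) (hmemDc i' h2)
        (fun h => hne (congrArg Prod.fst h).symm) hL.symm
  · exact key (i, σf i) (i', σf i') (hmemDc i h1)
      (fun h => hne (congrArg Prod.fst h)) hL
end

section
/- Let M be an n×n array with no transversal such that: (a) M has at least αn² distinct symbols for some 1/2 ≤ α ≤ 1; (b) M_{nn} is a clone (its symbol occurs more than once in M); (c) |R_n(M) ∪ C_n(M)| ≥ (k+1)n − 1; and (d) the array M' obtained from M by replacing the symbol in cell (n,n) by a brand-new symbol has a transversal. Then M has at most (1/2)(k² − 2k + 2)n² + (1/2)(3k − 2)n distinct symbols. -/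
open Finset Equiv in
lemma card_fix_two {n : ℕ} (a b c d : Fin n) (hab : a ≠ b) :
    (Finset.univ.filter fun σ : Equiv.Perm (Fin n) => σ a = c ∧ σ b = d).card ≤ Nat.factorial (n - 2) := by
  classical
  set F := (Finset.univ.filter fun σ : Equiv.Perm (Fin n) => σ a = c ∧ σ b = d) with hF
  rcases F.eq_empty_or_nonempty with h | ⟨σ₀, hσ₀⟩
  · simp [h]
  · simp only [hF, mem_filter] at hσ₀
    have hinj : Set.InjOn (fun σ => σ₀⁻¹ * σ) F := fun x _ y _ h => by
      simpa using mul_left_cancel (a := σ₀⁻¹) (by simpa using h)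
    have hmaps : ∀ σ ∈ F, σ₀⁻¹ * σ ∈ (Finset.univ.filter fun τ : Equiv.Perm (Fin n) => τ a = a ∧ τ b = b) := by
      intro σ hσ
      simp only [hF, mem_filter] at hσ
      simp only [mem_filter, mem_univ, true_and, Equiv.Perm.mul_apply]
      constructor
      · rw [hσ.2.1]; exact σ₀.injective (by simp [hσ₀.2.1])
      · rw [hσ.2.2]; exact σ₀.injective (by simp [hσ₀.2.2])
    have h1 : F.card ≤ (Finset.univ.filter fun τ : Equiv.Perm (Fin n) => τ a = a ∧ τ b = b).card :=
      Finset.card_le_card_of_injOn _ hmaps hinj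
    refine h1.trans ?_
    -- count perms fixing a and b
    have h2 : (Finset.univ.filter fun τ : Equiv.Perm (Fin n) => τ a = a ∧ τ b = b).card
        = Fintype.card {τ : Equiv.Perm (Fin n) // τ a = a ∧ τ b = b} := by
      rw [Fintype.card_subtype]
    rw [h2]
    have hinj2 : Function.Injective
        (fun τ : {τ : Equiv.Perm (Fin n) // τ a = a ∧ τ b = b} =>
          (⟨τ.1, fun x hx => by
            have hx' : x = a ∨ x = b := by
              by_contra hc; push_neg at hc; exact hx ⟨hc.1, hc.2⟩
            rcases hx' with rfl | rfl
            · exact τ.2.1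
            · exact τ.2.2⟩ : { f : Equiv.Perm (Fin n) // ∀ x, ¬(x ≠ a ∧ x ≠ b) → f x = x })) := by
      intro x y h
      have h2 := congrArg (fun z : { f : Equiv.Perm (Fin n) // ∀ x, ¬(x ≠ a ∧ x ≠ b) → f x = x } => z.1) h
      exact Subtype.ext h2
    have := Fintype.card_le_of_injective _ hinj2
    refine this.trans ?_
    rw [← Fintype.card_congr (Equiv.Perm.subtypeEquivSubtypePerm (fun x : Fin n => x ≠ a ∧ x ≠ b))]
    rw [Fintype.card_perm]
    have : Fintype.card {x : Fin n // x ≠ a ∧ x ≠ b} ≤ n - 2 := by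
      rw [Fintype.card_subtype]
      have : (Finset.univ.filter fun x : Fin n => x ≠ a ∧ x ≠ b) ⊆ (Finset.univ \ {a, b}) := by
        intro x hx; simp only [mem_filter] at hx; simp [hx.2.1, hx.2.2]
      refine (Finset.card_le_card this).trans ?_
      rw [Finset.card_sdiff_of_subset (by simp)]
      simp [Finset.card_pair hab]
    exact Nat.factorial_le this


lemma few_symbols_of_no_transversal {S : Type*} [DecidableEq S] (m : ℕ) (hm : 1 ≤ m)
    (M : Fin (m + 1) × Fin (m + 1) → S) (hfree : ¬ HasTransversal M) :
    numSymbols M + (m + 1) ≤ (m + 1) * (m + 1) := by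
  classical
  set PP := (Finset.univ.filter fun x : (Fin (m+1) × Fin (m+1)) × (Fin (m+1) × Fin (m+1)) =>
    M x.1 = M x.2 ∧ x.1.1 ≠ x.2.1 ∧ x.1.2 ≠ x.2.2) with hPP
  have hcoll : ∀ σ : Equiv.Perm (Fin (m+1)), ∃ i j : Fin (m+1), i ≠ j ∧ M (i, σ i) = M (j, σ j) := by
    intro σ
    have hni : ¬ Function.Injective fun i => M (i, σ i) := fun h => hfree ⟨σ, h⟩
    rw [Function.not_injective_iff] at hni
    obtain ⟨i, j, h1, h2⟩ := hni
    exact ⟨i, j, h2, h1⟩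
  set T := (Finset.univ.filter fun x : Equiv.Perm (Fin (m+1)) × (Fin (m+1) × Fin (m+1)) =>
    x.2.1 ≠ x.2.2 ∧ M (x.2.1, x.1 x.2.1) = M (x.2.2, x.1 x.2.2)) with hT
  -- lower bound on T
  have hTlow : 2 * Nat.factorial (m+1) ≤ T.card := by
    have h1 : T.card = ∑ σ ∈ (Finset.univ : Finset (Equiv.Perm (Fin (m+1)))),
        (T.filter fun x => x.1 = σ).card :=
      Finset.card_eq_sum_card_fiberwise (fun x _ => Finset.mem_univ _)
    have h2 : ∀ σ : Equiv.Perm (Fin (m+1)), 2 ≤ (T.filter fun x => x.1 = σ).card := by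
      intro σ
      obtain ⟨i, j, hij, hMij⟩ := hcoll σ
      have hm1 : (σ, (i, j)) ∈ T.filter fun x => x.1 = σ := by
        rw [Finset.mem_filter, hT, Finset.mem_filter]
        exact ⟨⟨Finset.mem_univ _, hij, hMij⟩, rfl⟩
      have hm2 : (σ, (j, i)) ∈ T.filter fun x => x.1 = σ := by
        rw [Finset.mem_filter, hT, Finset.mem_filter]
        exact ⟨⟨Finset.mem_univ _, hij.symm, hMij.symm⟩, rfl⟩
      have hne : ((σ, (i, j)) : Equiv.Perm (Fin (m+1)) × (Fin (m+1) × Fin (m+1))) ≠ (σ, (j, i)) :=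
        fun h => hij (congrArg (fun z : Equiv.Perm (Fin (m+1)) × (Fin (m+1) × Fin (m+1)) => z.2.1) h)
      have hsub : ({(σ, (i, j)), (σ, (j, i))} : Finset (Equiv.Perm (Fin (m+1)) × (Fin (m+1) × Fin (m+1))))
          ⊆ T.filter fun x => x.1 = σ := by
        intro x hx
        rcases Finset.mem_insert.mp hx with rfl | hx
        · exact hm1
        · rw [Finset.mem_singleton] at hx; subst hx; exact hm2
      calc 2 = ({(σ, (i, j)), (σ, (j, i))} : Finset (Equiv.Perm (Fin (m+1)) × (Fin (m+1) × Fin (m+1)))).card :=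
            (Finset.card_pair hne).symm
        _ ≤ _ := Finset.card_le_card hsub
    calc 2 * Nat.factorial (m+1)
        = ∑ _σ ∈ (Finset.univ : Finset (Equiv.Perm (Fin (m+1)))), 2 := by
          rw [Finset.sum_const, Finset.card_univ, Fintype.card_perm, Fintype.card_fin,
            smul_eq_mul, mul_comm]
      _ ≤ _ := by rw [h1]; exact Finset.sum_le_sum (fun σ _ => h2 σ)
  -- upper bound on T
  have hTup : T.card ≤ PP.card * Nat.factorial (m - 1) := by
    have hmaps : ∀ x ∈ T, ((x.2.1, x.1 x.2.1), (x.2.2, x.1 x.2.2)) ∈ PP := by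
      intro x hx
      rw [hT, Finset.mem_filter] at hx
      rw [hPP, Finset.mem_filter]
      exact ⟨Finset.mem_univ _, hx.2.2, hx.2.1, fun h => hx.2.1 (x.1.injective h)⟩
    have h1 : T.card = ∑ pq ∈ PP,
        (T.filter fun x => ((x.2.1, x.1 x.2.1), (x.2.2, x.1 x.2.2)) = pq).card :=
      Finset.card_eq_sum_card_fiberwise hmaps
    have h2 : ∀ pq ∈ PP,
        (T.filter fun x => ((x.2.1, x.1 x.2.1), (x.2.2, x.1 x.2.2)) = pq).card
          ≤ Nat.factorial (m - 1) := by
      intro pq hpq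
      rw [hPP, Finset.mem_filter] at hpq
      have hb : (T.filter fun x => ((x.2.1, x.1 x.2.1), (x.2.2, x.1 x.2.2)) = pq).card
          ≤ (Finset.univ.filter fun σ : Equiv.Perm (Fin (m+1)) =>
              σ pq.1.1 = pq.1.2 ∧ σ pq.2.1 = pq.2.2).card := by
        apply Finset.card_le_card_of_injOn (fun x => x.1)
        · intro x hx
          rw [Finset.mem_coe, Finset.mem_filter] at hx
          have h3 := hx.2
          have e1 : x.2.1 = pq.1.1 := congrArg (fun z => z.1.1) h3
          have e2 : x.1 x.2.1 = pq.1.2 := congrArg (fun z => z.1.2) h3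
          have e3 : x.2.2 = pq.2.1 := congrArg (fun z => z.2.1) h3
          have e4 : x.1 x.2.2 = pq.2.2 := congrArg (fun z => z.2.2) h3
          rw [Finset.mem_coe, Finset.mem_filter]
          exact ⟨Finset.mem_univ _, by rw [← e1, e2], by rw [← e3, e4]⟩
        · intro x hx y hy hxy
          simp only [Finset.coe_filter, Set.mem_setOf_eq] at hx hy
          have e1 : x.2.1 = pq.1.1 := congrArg (fun z => z.1.1) hx.2
          have e3 : x.2.2 = pq.2.1 := congrArg (fun z => z.2.1) hx.2
          have f1 : y.2.1 = pq.1.1 := congrArg (fun z => z.1.1) hy.2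
          have f3 : y.2.2 = pq.2.1 := congrArg (fun z => z.2.1) hy.2
          have h4 : x.2 = y.2 := by
            apply Prod.ext
            · rw [e1, f1]
            · rw [e3, f3]
          exact Prod.ext hxy h4
      refine hb.trans ?_
      have h5 := card_fix_two pq.1.1 pq.2.1 pq.1.2 pq.2.2 hpq.2.2.1
      have h6 : m + 1 - 2 = m - 1 := by omega
      rwa [h6] at h5
    calc T.card = _ := h1
      _ ≤ ∑ _pq ∈ PP, Nat.factorial (m - 1) := Finset.sum_le_sum h2
      _ = PP.card * Nat.factorial (m - 1) := by rw [Finset.sum_const, smul_eq_mul]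
  -- combine: PP is big
  have hPPbig : 2 * ((m + 1) * m) ≤ PP.card := by
    have hfact : Nat.factorial (m + 1) = (m + 1) * m * Nat.factorial (m - 1) := by
      obtain ⟨mm, rfl⟩ : ∃ mm, m = mm + 1 := ⟨m - 1, by omega⟩
      rw [Nat.factorial_succ, Nat.factorial_succ, ← mul_assoc]
      simp
    have h1 : (2 * ((m + 1) * m)) * Nat.factorial (m - 1) ≤ PP.card * Nat.factorial (m - 1) := by
      calc (2 * ((m + 1) * m)) * Nat.factorial (m - 1)
          = 2 * ((m + 1) * m * Nat.factorial (m - 1)) := by ring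
        _ = 2 * Nat.factorial (m + 1) := by rw [← hfact]
        _ ≤ T.card := hTlow
        _ ≤ PP.card * Nat.factorial (m - 1) := hTup
    exact Nat.le_of_mul_le_mul_right h1 (Nat.factorial_pos (m - 1))
  -- upper bound PP.card by symbol statistics
  have hcu : (Finset.univ : Finset (Fin (m+1) × Fin (m+1))).card = (m+1) * (m+1) := by
    simp [Fintype.card_prod]
  have hsum : ∑ v ∈ Finset.univ.image M,
      (Finset.univ.filter fun p : Fin (m+1) × Fin (m+1) => M p = v).card = (m+1) * (m+1) := by
    rw [← Finset.card_eq_sum_card_image M Finset.univ, hcu]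
  have hd1 : ∀ v ∈ Finset.univ.image M,
      1 ≤ (Finset.univ.filter fun p : Fin (m+1) × Fin (m+1) => M p = v).card := by
    intro v hv
    rw [Finset.mem_image] at hv
    obtain ⟨p, _, hp⟩ := hv
    exact Finset.card_pos.mpr ⟨p, by rw [Finset.mem_filter]; exact ⟨Finset.mem_univ _, hp⟩⟩
  set t := ∑ v ∈ Finset.univ.image M,
    ((Finset.univ.filter fun p : Fin (m+1) × Fin (m+1) => M p = v).card - 1) with ht
  have hts : t + numSymbols M = (m+1) * (m+1) := by
    have h1 : ∑ v ∈ Finset.univ.image M,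
        (((Finset.univ.filter fun p : Fin (m+1) × Fin (m+1) => M p = v).card - 1) + 1)
        = (m+1) * (m+1) := by
      rw [← hsum]
      exact Finset.sum_congr rfl (fun v hv => by have := hd1 v hv; omega)
    rw [Finset.sum_add_distrib, Finset.sum_const, smul_eq_mul, mul_one] at h1
    exact h1
  have hdle : ∀ v ∈ Finset.univ.image M,
      (Finset.univ.filter fun p : Fin (m+1) × Fin (m+1) => M p = v).card ≤ t + 1 := by
    intro v hv
    have h1 : (Finset.univ.filter fun p : Fin (m+1) × Fin (m+1) => M p = v).card - 1 ≤ t :=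
      Finset.single_le_sum
        (f := fun v => (Finset.univ.filter fun p : Fin (m+1) × Fin (m+1) => M p = v).card - 1)
        (fun w _ => Nat.zero_le _) hv
    omega
  have hPPle : PP.card ≤ (t + 1) * t := by
    have hsub : PP ⊆ (Finset.univ.image M).biUnion
        (fun v => (Finset.univ.filter fun p : Fin (m+1) × Fin (m+1) => M p = v).offDiag) := by
      intro x hx
      rw [hPP, Finset.mem_filter] at hx
      rw [Finset.mem_biUnion]
      refine ⟨M x.1, Finset.mem_image_of_mem M (Finset.mem_univ _), ?_⟩
      rw [Finset.mem_offDiag]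
      refine ⟨by rw [Finset.mem_filter]; exact ⟨Finset.mem_univ _, rfl⟩,
        by rw [Finset.mem_filter]; exact ⟨Finset.mem_univ _, hx.2.1.symm⟩,
        fun h => hx.2.2.1 (by rw [h])⟩
    have hdisj : ∀ v ∈ Finset.univ.image M, ∀ w ∈ Finset.univ.image M, v ≠ w →
        Disjoint ((Finset.univ.filter fun p : Fin (m+1) × Fin (m+1) => M p = v).offDiag)
          ((Finset.univ.filter fun p : Fin (m+1) × Fin (m+1) => M p = w).offDiag) := by
      intro v _ w _ hvw
      rw [Finset.disjoint_left]
      intro x hxv hxw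
      rw [Finset.mem_offDiag] at hxv hxw
      have h1 : M x.1 = v := (Finset.mem_filter.mp hxv.1).2
      have h2 : M x.1 = w := (Finset.mem_filter.mp hxw.1).2
      exact hvw (h1 ▸ h2)
    calc PP.card ≤ _ := Finset.card_le_card hsub
      _ = ∑ v ∈ Finset.univ.image M,
          ((Finset.univ.filter fun p : Fin (m+1) × Fin (m+1) => M p = v).offDiag).card :=
          Finset.card_biUnion hdisj
      _ ≤ ∑ v ∈ Finset.univ.image M,
          (t + 1) * ((Finset.univ.filter fun p : Fin (m+1) × Fin (m+1) => M p = v).card - 1) := by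
          apply Finset.sum_le_sum
          intro v hv
          rw [Finset.offDiag_card]
          have he : (Finset.univ.filter fun p : Fin (m+1) × Fin (m+1) => M p = v).card *
              (Finset.univ.filter fun p : Fin (m+1) × Fin (m+1) => M p = v).card -
              (Finset.univ.filter fun p : Fin (m+1) × Fin (m+1) => M p = v).card
              = (Finset.univ.filter fun p : Fin (m+1) × Fin (m+1) => M p = v).card *
              ((Finset.univ.filter fun p : Fin (m+1) × Fin (m+1) => M p = v).card - 1) := by
            rw [Nat.mul_sub, mul_one]
          rw [he]
          exact Nat.mul_le_mul_right _ (hdle v hv)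
      _ = (t + 1) * t := by rw [← Finset.mul_sum, ht]
  -- finish
  have hfin : 2 * ((m + 1) * m) ≤ (t + 1) * t := hPPbig.trans hPPle
  by_contra hgoal
  push_neg at hgoal
  have htle : t + 1 ≤ m + 1 ∧ t ≤ m := by omega
  have h2 : (t + 1) * t ≤ (m + 1) * m := Nat.mul_le_mul htle.1 htle.2
  have h3 : 2 * ((m + 1) * m) ≤ (m + 1) * m := hfin.trans h2
  have h4 : 0 < (m + 1) * m := by positivity
  omega


lemma k1_contradiction {S : Type*} [DecidableEq S] (m : ℕ) (hm : 1 ≤ m)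
    (M : Fin (m + 1) × Fin (m + 1) → S)
    (hfree : ¬ HasTransversal M)
    (hRC : ((Finset.univ.image fun j => M (Fin.last m, j)) ∪
            (Finset.univ.image fun i => M (i, Fin.last m))).card ≥ 2 * (m + 1) - 1)
    (hM' : HasTransversal (fun p : Fin (m + 1) × Fin (m + 1) =>
      if p = (Fin.last m, Fin.last m) then (none : Option S) else some (M p))) :
    False := by
  classical
  set L := Fin.last m with hL
  obtain ⟨σ, hσ⟩ := hM'
  -- rainbow row and column
  set R := (Finset.univ.image fun j => M (L, j)) with hR
  set C := (Finset.univ.image fun i => M (i, L)) with hC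
  have hcRC : M (L, L) ∈ R ∩ C := by
    rw [Finset.mem_inter, hR, hC]
    exact ⟨Finset.mem_image_of_mem _ (Finset.mem_univ L),
      Finset.mem_image_of_mem _ (Finset.mem_univ L)⟩
  have hunion : (R ∪ C).card + (R ∩ C).card = R.card + C.card :=
    Finset.card_union_add_card_inter R C
  have hRle : R.card ≤ m + 1 := (Finset.card_image_le).trans (by simp)
  have hCle : C.card ≤ m + 1 := (Finset.card_image_le).trans (by simp)
  have hIge : 1 ≤ (R ∩ C).card := Finset.card_pos.mpr ⟨_, hcRC⟩
  have hRcard : R.card = m + 1 := by omega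
  have hCcard : C.card = m + 1 := by omega
  have hIcard : (R ∩ C).card = 1 := by omega
  have hRinj : Function.Injective fun j => M (L, j) := by
    have h1 : Set.InjOn (fun j => M (L, j)) (Finset.univ : Finset (Fin (m+1))) :=
      Finset.card_image_iff.mp (by rw [← hR, hRcard]; simp)
    intro x y h
    exact h1 (by simp) (by simp) h
  have hCinj : Function.Injective fun i => M (i, L) := by
    have h1 : Set.InjOn (fun i => M (i, L)) (Finset.univ : Finset (Fin (m+1))) :=
      Finset.card_image_iff.mp (by rw [← hC, hCcard]; simp)
    intro x y h
    exact h1 (by simp) (by simp) h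
  have hinter : R ∩ C = {M (L, L)} := by
    apply (Finset.eq_of_subset_of_card_le (Finset.singleton_subset_iff.mpr hcRC) ?_).symm
    rw [hIcard, Finset.card_singleton]
  -- basic facts about boundary symbols
  have haC : ∀ i : Fin (m+1), i ≠ L → M (i, L) ≠ M (L, L) := by
    intro i hi h
    exact hi (hCinj h)
  have hbC : ∀ j : Fin (m+1), j ≠ L → M (L, j) ≠ M (L, L) := by
    intro j hj h
    exact hj (hRinj h)
  have hab : ∀ i j : Fin (m+1), i ≠ L → j ≠ L → M (i, L) ≠ M (L, j) := by
    intro i j hi hj h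
    have h1 : M (i, L) ∈ R ∩ C := by
      rw [Finset.mem_inter, hR, hC]
      exact ⟨by rw [h]; exact Finset.mem_image_of_mem _ (Finset.mem_univ j),
        Finset.mem_image_of_mem _ (Finset.mem_univ i)⟩
    rw [hinter, Finset.mem_singleton] at h1
    exact haC i hi h1
  -- σ fixes L
  have hσL : σ L = L := by
    by_contra hσL
    apply hfree
    refine ⟨σ, ?_⟩
    have hne : ∀ i : Fin (m+1), (i, σ i) ≠ (L, L) := by
      intro i h
      have h1 : i = L := congrArg Prod.fst h
      have h2 : σ i = L := congrArg Prod.snd h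
      rw [h1] at h2
      exact hσL h2
    intro x y hxy
    apply hσ
    simp only [if_neg (hne x), if_neg (hne y)]
    exact congrArg some hxy
  -- diagonal symbols are distinct off L
  have hD : ∀ r r' : Fin (m+1), r ≠ L → r' ≠ L → M (r, σ r) = M (r', σ r') → r = r' := by
    intro r r' hr hr' h
    apply hσ
    have h1 : (r, σ r) ≠ (L, L) := fun hh => hr (congrArg Prod.fst hh)
    have h2 : (r', σ r') ≠ (L, L) := fun hh => hr' (congrArg Prod.fst hh)
    simp only [if_neg h1, if_neg h2]
    exact congrArg some h
  -- σ i ≠ L for i ≠ L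
  have hσne : ∀ i : Fin (m+1), i ≠ L → σ i ≠ L := by
    intro i hi h
    exact hi (σ.injective (h.trans hσL.symm))
  -- the symbol c is on the diagonal
  have hi₀ : ∃ i₀ : Fin (m+1), i₀ ≠ L ∧ M (i₀, σ i₀) = M (L, L) := by
    by_contra h
    push_neg at h
    apply hfree
    refine ⟨σ, ?_⟩
    intro x y hxy
    have hxy' : M (x, σ x) = M (y, σ y) := hxy
    by_cases hx : x = L <;> by_cases hy : y = L
    · rw [hx, hy]
    · exfalso
      apply h y hy
      rw [← hxy', hx, hσL]
    · exfalso
      apply h x hx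
      rw [hxy', hy, hσL]
    · exact hD x y hx hy hxy
  obtain ⟨i₀, hi₀L, hi₀c⟩ := hi₀
  -- witness function from failed swaps
  have hW : ∀ i : Fin (m+1), i ≠ L → ∃ w : Fin (m+1), w ≠ L ∧ w ≠ i ∧
      (M (w, σ w) = M (i, L) ∨ M (w, σ w) = M (L, σ i)) := by
    intro i hi
    set τ : Equiv.Perm (Fin (m+1)) := (Equiv.swap i L).trans σ with hτ
    have hni : ¬ Function.Injective fun r => M (r, τ r) := fun h => hfree ⟨τ, h⟩
    rw [Function.not_injective_iff] at hni
    obtain ⟨x, y, hxy, hne⟩ := hni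
    have hτi : τ i = L := by rw [hτ]; simp [Equiv.swap_apply_left, hσL]
    have hτL : τ L = σ i := by rw [hτ]; simp [Equiv.swap_apply_right]
    have hτo : ∀ r : Fin (m+1), r ≠ i → r ≠ L → τ r = σ r := by
      intro r h1 h2
      rw [hτ]
      simp [Equiv.swap_apply_of_ne_of_ne h1 h2]
    -- case analysis
    by_cases hx1 : x = i <;> by_cases hy1 : y = i
    · exact absurd (hx1.trans hy1.symm) hne
    · by_cases hy2 : y = L
      · -- M(i, L) = M(L, σ i)
        exfalso
        rw [hx1, hy2, hτi, hτL] at hxy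
        exact hab i (σ i) hi (hσne i hi) hxy
      · refine ⟨y, hy2, hy1, Or.inl ?_⟩
        rw [hx1, hτi] at hxy
        rw [hτo y hy1 hy2] at hxy
        exact hxy.symm
    · by_cases hx2 : x = L
      · exfalso
        rw [hy1, hx2, hτi, hτL] at hxy
        exact hab i (σ i) hi (hσne i hi) hxy.symm
      · refine ⟨x, hx2, hx1, Or.inl ?_⟩
        rw [hy1, hτi] at hxy
        rw [hτo x hx1 hx2] at hxy
        exact hxy
    · by_cases hx2 : x = L <;> by_cases hy2 : y = L
      · exact absurd (hx2.trans hy2.symm) hne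
      · refine ⟨y, hy2, hy1, Or.inr ?_⟩
        rw [hx2, hτL] at hxy
        rw [hτo y hy1 hy2] at hxy
        exact hxy.symm
      · refine ⟨x, hx2, hx1, Or.inr ?_⟩
        rw [hy2, hτL] at hxy
        rw [hτo x hx1 hx2] at hxy
        exact hxy
      · exfalso
        rw [hτo x hx1 hx2, hτo y hy1 hy2] at hxy
        exact hne (hD x y hx2 hy2 hxy)
  -- build the witness map and derive a cardinality contradiction
  set f : Fin (m+1) → Fin (m+1) := fun i => if h : i ≠ L then (hW i h).choose else L with hf
  have hfspec : ∀ i : Fin (m+1), ∀ h : i ≠ L, f i ≠ L ∧ f i ≠ i ∧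
      (M (f i, σ (f i)) = M (i, L) ∨ M (f i, σ (f i)) = M (L, σ i)) := by
    intro i h
    rw [hf]
    simp only [dif_pos h]
    exact (hW i h).choose_spec
  have hmaps : ∀ i ∈ Finset.univ.erase L, f i ∈ (Finset.univ.erase L).erase i₀ := by
    intro i hi
    have hiL : i ≠ L := (Finset.mem_erase.mp hi).1
    obtain ⟨h1, h2, h3⟩ := hfspec i hiL
    rw [Finset.mem_erase, Finset.mem_erase]
    refine ⟨?_, h1, Finset.mem_univ _⟩
    intro h
    rcases h3 with h3 | h3
    · rw [h, hi₀c] at h3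
      exact haC i hiL h3.symm
    · rw [h, hi₀c] at h3
      exact hbC (σ i) (hσne i hiL) h3.symm
  have hinj : Set.InjOn f (Finset.univ.erase L) := by
    intro i hi j hj hij
    rw [Finset.coe_erase, Set.mem_diff] at hi hj
    have hiL : i ≠ L := by simpa using hi.2
    have hjL : j ≠ L := by simpa using hj.2
    obtain ⟨_, _, h3⟩ := hfspec i hiL
    obtain ⟨_, _, h4⟩ := hfspec j hjL
    rw [hij] at h3
    rcases h3 with h3 | h3 <;> rcases h4 with h4 | h4
    · exact hCinj (h3.symm.trans h4)
    · exact absurd (h3.symm.trans h4) (hab i (σ j) hiL (hσne j hjL))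
    · exact absurd (h4.symm.trans h3) (hab j (σ i) hjL (hσne i hiL))
    · exact σ.injective (hRinj (h3.symm.trans h4))
  have hcard := Finset.card_le_card_of_injOn f hmaps hinj
  have hc1 : (Finset.univ.erase L).card = m := by
    rw [Finset.card_erase_of_mem (Finset.mem_univ _)]
    simp
  have hc2 : ((Finset.univ.erase L).erase i₀).card = m - 1 := by
    rw [Finset.card_erase_of_mem (by rw [Finset.mem_erase]; exact ⟨hi₀L, Finset.mem_univ _⟩), hc1]
  rw [hc1, hc2] at hcard
  omega


theorem clone_near_trans_few_symbols {S : Type*} [DecidableEq S] (m k : ℕ)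
    (α : ℝ) (hα : 1 / 2 ≤ α) (hα1 : α ≤ 1)
    (M : Fin (m + 1) × Fin (m + 1) → S)
    (hfree : ¬ HasTransversal M)
    (hsym : α * (m + 1) ^ 2 ≤ (numSymbols M : ℝ))
    (hclone : 1 < (Finset.univ.filter fun p : Fin (m + 1) × Fin (m + 1) =>
      M p = M (Fin.last m, Fin.last m)).card)
    (hRC : ((Finset.univ.image fun j => M (Fin.last m, j)) ∪
            (Finset.univ.image fun i => M (i, Fin.last m))).card ≥
      (k + 1) * (m + 1) - 1)
    (hM' : HasTransversal (fun p : Fin (m + 1) × Fin (m + 1) =>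
      if p = (Fin.last m, Fin.last m) then (none : Option S) else some (M p))) :
    (numSymbols M : ℝ) ≤ ((k : ℝ) ^ 2 - 2 * k + 2) * (m + 1) ^ 2 / 2
      + (3 * (k : ℝ) - 2) * (m + 1) / 2 := by
  classical
  rcases Nat.eq_zero_or_pos m with hm0 | hm
  · exfalso
    subst hm0
    have h1 : (Finset.univ.filter fun p : Fin (0 + 1) × Fin (0 + 1) =>
        M p = M (Fin.last 0, Fin.last 0)).card ≤ 1 := by
      refine (Finset.card_filter_le _ _).trans ?_
      simp
    omega
  match k with
  | 0 =>
    have key := few_symbols_of_no_transversal m hm M hfree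
    have hkey : (numSymbols M : ℝ) + ((m : ℝ) + 1) ≤ ((m : ℝ) + 1) * ((m : ℝ) + 1) := by
      exact_mod_cast key
    push_cast
    nlinarith [hkey]
  | 1 =>
    exfalso
    have hRC' : ((Finset.univ.image fun j => M (Fin.last m, j)) ∪
            (Finset.univ.image fun i => M (i, Fin.last m))).card ≥ 2 * (m + 1) - 1 := by
      have h := hRC
      omega
    exact k1_contradiction m hm M hfree hRC' hM'
  | (k2 + 2) =>
    exfalso
    have h1 : ((Finset.univ.image fun j => M (Fin.last m, j)) ∪
            (Finset.univ.image fun i => M (i, Fin.last m))).card ≤ (m + 1) + (m + 1) := by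
      refine (Finset.card_union_le _ _).trans ?_
      have ha : (Finset.univ.image fun j => M (Fin.last m, j)).card ≤ m + 1 :=
        (Finset.card_image_le).trans (by simp)
      have hb : (Finset.univ.image fun i => M (i, Fin.last m)).card ≤ m + 1 :=
        (Finset.card_image_le).trans (by simp)
      omega
    have h2 : 3 * (m + 1) ≤ (k2 + 2 + 1) * (m + 1) := Nat.mul_le_mul_right _ (by omega)
    have h3 := hRC
    omega
end

section
/- If every n×n Latin array with at least 3n − 2 distinct symbols has a transversal (for all n), then every Latin square of order n has a partial transversal of length n − 1. -/
theorem brualdi_connection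
    (h : ∀ (m : ℕ) (S : Type) [DecidableEq S] (A : Fin m × Fin m → S),
      IsLatin A → (3 * m - 2 : ℤ) ≤ (numSymbols A : ℤ) → HasTransversal A)
    (n : ℕ) (S : Type) [DecidableEq S] (L : Fin n × Fin n → S)
    (hL : IsLatin L) (hsq : numSymbols L = n) :
    HasPartialTransversal L (n - 1) := by
  classical
  -- the extended array
  let A : Fin (n+1) × Fin (n+1) → (S ⊕ (Fin (n+1) × Fin (n+1))) := fun p =>
    if hp : p.1.val < n ∧ p.2.val < n then Sum.inl (L (⟨p.1, hp.1⟩, ⟨p.2, hp.2⟩))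
    else Sum.inr p
  have hAin : ∀ (i j : Fin (n+1)) (h1 : i.val < n) (h2 : j.val < n),
      A (i, j) = Sum.inl (L (⟨i, h1⟩, ⟨j, h2⟩)) := by
    intro i j h1 h2
    exact dif_pos ⟨h1, h2⟩
  have hAout : ∀ p : Fin (n+1) × Fin (n+1), ¬ (p.1.val < n ∧ p.2.val < n) → A p = Sum.inr p := by
    intro p hp; exact dif_neg hp
  have hAblock : ∀ (q : Fin n × Fin n), A (q.1.castSucc, q.2.castSucc) = Sum.inl (L q) := by
    intro q
    rw [hAin _ _ q.1.isLt q.2.isLt]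
    exact congrArg Sum.inl (congrArg L (Prod.ext (Fin.ext rfl) (Fin.ext rfl)))
  -- A is Latin
  have hAL : IsLatin A := by
    constructor
    · intro i j1 j2 hEq
      have hEq' : A (i, j1) = A (i, j2) := hEq
      by_cases h1 : i.val < n ∧ j1.val < n <;> by_cases h2 : i.val < n ∧ j2.val < n
      · rw [hAin _ _ h1.1 h1.2, hAin _ _ h2.1 h2.2] at hEq'
        have := hL.1 ⟨i, h1.1⟩ (Sum.inl.inj hEq')
        have h3 : (j1 : ℕ) = (j2 : ℕ) := by simpa [Fin.ext_iff] using this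
        exact Fin.ext h3
      · rw [hAin _ _ h1.1 h1.2, hAout _ h2] at hEq'; exact absurd hEq' (by simp)
      · rw [hAout _ h1, hAin _ _ h2.1 h2.2] at hEq'; exact absurd hEq' (by simp)
      · rw [hAout _ h1, hAout _ h2] at hEq'
        exact (Prod.ext_iff.mp (Sum.inr.inj hEq')).2
    · intro j i1 i2 hEq
      have hEq' : A (i1, j) = A (i2, j) := hEq
      by_cases h1 : i1.val < n ∧ j.val < n <;> by_cases h2 : i2.val < n ∧ j.val < n
      · rw [hAin _ _ h1.1 h1.2, hAin _ _ h2.1 h2.2] at hEq'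
        have := hL.2 ⟨j, h1.2⟩ (Sum.inl.inj hEq')
        have h3 : (i1 : ℕ) = (i2 : ℕ) := by simpa [Fin.ext_iff] using this
        exact Fin.ext h3
      · rw [hAin _ _ h1.1 h1.2, hAout _ h2] at hEq'; exact absurd hEq' (by simp)
      · rw [hAout _ h1, hAin _ _ h2.1 h2.2] at hEq'; exact absurd hEq' (by simp)
      · rw [hAout _ h1, hAout _ h2] at hEq'
        exact (Prod.ext_iff.mp (Sum.inr.inj hEq')).1
  -- count symbols of A
  have hcount : (3 * (n+1) - 2 : ℤ) ≤ (numSymbols A : ℤ) := by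
    have key : 3 * n + 1 ≤ numSymbols A := by
      set B1 : Finset (S ⊕ (Fin (n+1) × Fin (n+1))) :=
        (Finset.univ.image L).image Sum.inl with hB1
      set B2 : Finset (S ⊕ (Fin (n+1) × Fin (n+1))) :=
        ((Finset.univ : Finset (Fin (n+1) × Fin (n+1))).filter
          (fun p => ¬ (p.1.val < n ∧ p.2.val < n))).image Sum.inr with hB2
      have hB1card : B1.card = n := by
        rw [hB1, Finset.card_image_of_injective _ Sum.inl_injective]
        exact hsq
      have hblockeq :
          (Finset.univ : Finset (Fin (n+1) × Fin (n+1))).filter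
            (fun p => p.1.val < n ∧ p.2.val < n)
          = (Finset.univ : Finset (Fin n × Fin n)).image
              (fun q => (q.1.castSucc, q.2.castSucc)) := by
        ext p
        simp only [Finset.mem_filter, Finset.mem_univ, true_and, Finset.mem_image]
        constructor
        · rintro ⟨h1, h2⟩
          exact ⟨(⟨p.1.val, h1⟩, ⟨p.2.val, h2⟩), by
            simp [Prod.ext_iff, Fin.ext_iff]⟩
        · rintro ⟨q, rfl⟩
          exact ⟨q.1.isLt, q.2.isLt⟩
      have hblockcard :
          ((Finset.univ : Finset (Fin (n+1) × Fin (n+1))).filter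
            (fun p => p.1.val < n ∧ p.2.val < n)).card = n * n := by
        rw [hblockeq, Finset.card_image_of_injective]
        · simp
        · intro a b hab
          simp only [Prod.ext_iff] at hab ⊢
          exact ⟨Fin.castSucc_injective _ hab.1, Fin.castSucc_injective _ hab.2⟩
      have hsplit := Finset.card_filter_add_card_filter_not
        (s := (Finset.univ : Finset (Fin (n+1) × Fin (n+1))))
        (p := fun p => p.1.val < n ∧ p.2.val < n)
      have htot : (Finset.univ : Finset (Fin (n+1) × Fin (n+1))).card = (n+1) * (n+1) := by
        simp
      have hB2card : B2.card = 2 * n + 1 := by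
        rw [hB2, Finset.card_image_of_injective _ Sum.inr_injective]
        have hnn : (n+1) * (n+1) = n * n + (2 * n + 1) := by ring
        omega
      have hdisj : Disjoint B1 B2 := by
        rw [Finset.disjoint_left]
        intro a ha hb
        rw [hB1] at ha; rw [hB2] at hb
        simp only [Finset.mem_image] at ha hb
        obtain ⟨x, _, rfl⟩ := ha
        obtain ⟨y, _, hy⟩ := hb
        exact absurd hy (by simp)
      have hsub : B1 ∪ B2 ⊆ Finset.univ.image A := by
        intro a ha
        rcases Finset.mem_union.mp ha with ha | ha
        · rw [hB1] at ha
          simp only [Finset.mem_image] at ha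
          obtain ⟨x, hx, rfl⟩ := ha
          simp only [Finset.mem_image, Finset.mem_univ, true_and] at hx
          obtain ⟨q, rfl⟩ := hx
          exact Finset.mem_image.mpr ⟨(q.1.castSucc, q.2.castSucc), Finset.mem_univ _, hAblock q⟩
        · rw [hB2] at ha
          simp only [Finset.mem_image, Finset.mem_filter, Finset.mem_univ, true_and] at ha
          obtain ⟨p, hp, rfl⟩ := ha
          exact Finset.mem_image.mpr ⟨p, Finset.mem_univ _, hAout p hp⟩
      have := Finset.card_le_card hsub
      rw [Finset.card_union_of_disjoint hdisj, hB1card, hB2card] at this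
      unfold numSymbols
      omega
    omega
  -- get a transversal of A
  obtain ⟨σ, hσ⟩ := h (n+1) (S ⊕ (Fin (n+1) × Fin (n+1))) A hAL hcount
  -- rows whose transversal cell lies in the block
  have hFcard : n - 1 ≤ (Finset.univ.filter (fun i : Fin n => (σ i.castSucc).val < n)).card := by
    have hc : (Finset.univ.filter (fun i : Fin n => ¬ (σ i.castSucc).val < n)).card ≤ 1 := by
      rw [Finset.card_le_one]
      intro a ha b hb
      obtain ⟨-, ha2⟩ := Finset.mem_filter.mp ha
      obtain ⟨-, hb2⟩ := Finset.mem_filter.mp hb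
      have ha' : σ a.castSucc = Fin.last n := by
        have := (σ a.castSucc).isLt
        exact Fin.ext (by simp [Fin.last]; omega)
      have hb' : σ b.castSucc = Fin.last n := by
        have := (σ b.castSucc).isLt
        exact Fin.ext (by simp [Fin.last]; omega)
      exact Fin.castSucc_injective _ (σ.injective (ha'.trans hb'.symm))
    have hsplit := Finset.card_filter_add_card_filter_not
      (s := (Finset.univ : Finset (Fin n))) (p := fun i => (σ i.castSucc).val < n)
    have huniv : (Finset.univ : Finset (Fin n)).card = n := by simp
    omega
  -- the partial transversal inside L
  set s : Finset (Fin n × Fin n) :=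
    (Finset.univ.filter (fun i : Fin n => (σ i.castSucc).val < n)).attach.image
      (fun i => (i.1, (⟨(σ i.1.castSucc).val, by
        have hi := i.2
        rw [Finset.mem_filter] at hi
        exact hi.2⟩ : Fin n))) with hs
  have hmem : ∀ q ∈ s, σ q.1.castSucc = q.2.castSucc := by
    intro q hq
    rw [hs] at hq
    simp only [Finset.mem_image] at hq
    obtain ⟨i, _, rfl⟩ := hq
    exact Fin.ext rfl
  have hscard : n - 1 ≤ s.card := by
    rw [hs, Finset.card_image_of_injective, Finset.card_attach]
    · exact hFcard
    · intro a b hab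
      exact Subtype.ext (Prod.ext_iff.mp hab).1
  have hfst : Set.InjOn Prod.fst (s : Set (Fin n × Fin n)) := by
    intro q hq q' hq' hEq
    have h1 := hmem q hq
    have h2 := hmem q' hq'
    rw [hEq] at h1
    exact Prod.ext hEq (Fin.castSucc_injective _ (h1.symm.trans h2))
  have hsnd : Set.InjOn Prod.snd (s : Set (Fin n × Fin n)) := by
    intro q hq q' hq' hEq
    have h1 := hmem q hq
    have h2 := hmem q' hq'
    rw [hEq] at h1
    exact Prod.ext (Fin.castSucc_injective _ (σ.injective (h1.trans h2.symm))) hEq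
  have hLinj : Set.InjOn L (s : Set (Fin n × Fin n)) := by
    intro q hq q' hq' hEq
    have h1 := hmem q hq
    have h2 := hmem q' hq'
    have e1 : A (q.1.castSucc, σ q.1.castSucc) = Sum.inl (L q) := by
      rw [h1]; exact hAblock q
    have e2 : A (q'.1.castSucc, σ q'.1.castSucc) = Sum.inl (L q') := by
      rw [h2]; exact hAblock q'
    have hAeq : (fun i => A (i, σ i)) q.1.castSucc = (fun i => A (i, σ i)) q'.1.castSucc := by
      simp only [e1, e2, hEq]
    exact hfst hq hq' (Fin.castSucc_injective _ (hσ hAeq))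
  obtain ⟨t, hts, htcard⟩ := Finset.exists_subset_card_eq hscard
  refine ⟨t, htcard, ?_, ?_, ?_⟩
  · exact hfst.mono (by exact_mod_cast hts)
  · exact hsnd.mono (by exact_mod_cast hts)
  · exact hLinj.mono (by exact_mod_cast hts)
end
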